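/- arXiv:2310.06314 — 11 statements merged into one kernel-verified Lean document; each statement's English description precedes it below -/
import Mathlib

section
/- For every positive integer n, (z+1)·s_n(z) = S_n(z), where S_n(z) is the large Schröder polynomial and s_n(z) is the little Schröder polynomial. -/
open Finset

/-- Large Schröder polynomial `S_n(z)`. -/
noncomputable def schroederS (n : ℕ) (z : ℚ) : ℚ :=
  ∑ k ∈ Finset.range (n + 1),
    (n.choose k : ℚ) * ((n + k).choose k : ℚ) * z ^ k / (k + 1)

/-- Little Schröder polynomial `s_n(z)`. -/
noncomputable def schroederLittle (n : ℕ) (z : ℚ) : ℚ :=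
  ∑ k ∈ Finset.Icc 1 n,
    (1 / (n : ℚ)) * (n.choose k : ℚ) * (n.choose (k - 1) : ℚ) * z ^ (k - 1) * (z + 1) ^ (n - k)

/-- Central Delannoy polynomial `D_n(z)`. -/
noncomputable def delannoy (n : ℕ) (z : ℚ) : ℚ :=
  ∑ k ∈ Finset.range (n + 1), (n.choose k : ℚ) * ((n + k).choose k : ℚ) * z ^ k

/-!
Expanding each `(z + 1) ^ (n - i)` binomially, the coefficient of `z ^ k` in `(z + 1) s_n(z)` is
`∑ i, N(n, i + 1) C(n - i, k - i)` with the Narayana numbers `N(n, j) = C(n, j) C(n, j - 1) / n`.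
Since `C(n, i) C(n - i, k - i) = C(n, k) C(k, i)`, Vandermonde's identity turns this into
`C(n, k) C(n + k, k + 1) / n = C(n, k) C(n + k, k) / (k + 1)`, the coefficient of `z ^ k` in `S_n(z)`.
-/

noncomputable def narayana (n k : ℕ) : ℚ :=
  1 / (n : ℚ) * n.choose k * n.choose (k - 1)

theorem sum_mul_pow_mul_add_one_pow {R : Type*} [CommSemiring R] (a : ℕ → R) (n : ℕ) (z : R) :
    ∑ i ∈ range (n + 1), a i * z ^ i * (z + 1) ^ (n - i) =
      ∑ k ∈ range (n + 1), (∑ i ∈ range (k + 1), a i * ((n - i).choose (k - i) : R)) * z ^ k := by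
  have expand : ∀ i ∈ range (n + 1), a i * z ^ i * (z + 1) ^ (n - i) =
      ∑ l ∈ range (n + 1 - i), a i * ((n - i).choose l : R) * z ^ (i + l) := by
    intro i hi
    rw [add_pow, mul_sum, show n + 1 - i = n - i + 1 by grind]
    refine sum_congr rfl fun l _ => ?_
    rw [one_pow, mul_one, pow_add]
    ring
  rw [sum_congr rfl expand, ← sum_range_diag_flip]
  refine sum_congr rfl fun k _ => ?_
  rw [sum_mul]
  refine sum_congr rfl fun i hi => ?_
  rw [Nat.add_sub_cancel' (mem_range_succ_iff.mp hi)]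

theorem sum_choose_succ_mul_choose_mul_choose (n k : ℕ) :
    ∑ i ∈ range (k + 1), n.choose (i + 1) * n.choose i * (n - i).choose (k - i) =
      n.choose k * (n + k).choose (k + 1) := by
  have choose_mul : ∀ i ∈ range (k + 1),
      n.choose (i + 1) * n.choose i * (n - i).choose (k - i) =
        n.choose k * (n.choose (i + 1) * k.choose (k + 1 - (i + 1))) := by
    intro i hi
    have hik := mem_range_succ_iff.mp hi
    rw [mul_assoc, ← Nat.choose_mul hik, Nat.add_sub_add_right, Nat.choose_symm hik]
    ring
  rw [sum_congr rfl choose_mul, ← mul_sum, Nat.add_choose_eq,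
    Nat.sum_antidiagonal_eq_sum_range_succ (fun a b => n.choose a * k.choose b),
    sum_range_succ' (fun a => n.choose a * k.choose (k + 1 - a)), Nat.sub_zero, Nat.choose_succ_self,
    mul_zero, add_zero]

theorem sum_narayana_succ_mul_choose (n k : ℕ) (hn : n ≠ 0) :
    ∑ i ∈ range (k + 1), narayana n (i + 1) * (n - i).choose (k - i) =
      n.choose k * (n + k).choose k / (k + 1) := by
  have hsucc : ((n + k).choose (k + 1) : ℚ) * (k + 1) = (n + k).choose k * n := by
    exact_mod_cast Nat.add_sub_cancel n k ▸ Nat.choose_succ_right_eq (n + k) k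
  have cast_term : ∀ i ∈ range (k + 1), narayana n (i + 1) * (n - i).choose (k - i) =
      1 / (n : ℚ) * (n.choose (i + 1) * n.choose i * (n - i).choose (k - i) : ℕ) := by
    intro i _
    rw [narayana, Nat.add_sub_cancel]
    push_cast
    ring
  rw [sum_congr rfl cast_term, ← mul_sum, ← Nat.cast_sum, sum_choose_succ_mul_choose_mul_choose,
    eq_div_iff (by positivity)]
  push_cast
  field_simp
  linear_combination (n.choose k : ℚ) * hsucc

theorem add_one_mul_schroederLittle (n : ℕ) (z : ℚ) :
    (z + 1) * schroederLittle n z =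
      ∑ i ∈ range (n + 1), narayana n (i + 1) * z ^ i * (z + 1) ^ (n - i) := by
  rw [sum_range_succ, narayana, Nat.choose_succ_self]
  simp only [Nat.cast_zero, mul_zero, zero_mul, add_zero]
  rw [schroederLittle, ← Ico_add_one_right_eq_Icc, sum_Ico_eq_sum_range, mul_sum, Nat.add_sub_cancel]
  refine sum_congr rfl fun i hi => ?_
  have hin := mem_range.mp hi
  rw [narayana, add_comm 1 i, Nat.add_sub_cancel, show n - i = n - (i + 1) + 1 by omega, pow_succ]
  ring

theorem little_times_zplus1_eq_large (n : ℕ) (hn : 1 ≤ n) (z : ℚ) :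
    (z + 1) * schroederLittle n z = schroederS n z := by
  rw [add_one_mul_schroederLittle, sum_mul_pow_mul_add_one_pow, schroederS]
  refine sum_congr rfl fun k _ => ?_
  rw [sum_narayana_succ_mul_choose n k (by omega)]
  ring
end

section
/- For every positive integer n, 2z(2n+1)·S_n(z) = D_{n+1}(z) − D_{n-1}(z), where D_n(z) is the n-th central Delannoy polynomial. -/
/-!
The coefficient `C(n,k) C(n+k,k)` of `D_n` factors as `C(n+k,2k) · C(2k,k)`. Comparing coefficients
of `z^(k+1)`, the relation becomes an identity between binomial coefficients of a single row
`M = n+k`: Pascal's rule twice expands `C(M+2,2k+2) - C(M,2k+2)`, the central binomial coefficients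
are related by `(k+1) C(2k+2,k+1) = 2(2k+1) C(2k,k)`, and what remains is
`(j+1) C(M,j+1) = (M-j) C(M,j)`.
-/

open Finset

def delannoyCoeff (n k : ℕ) : ℕ := n.choose k * (n + k).choose k

theorem delannoyCoeff_eq_choose_mul_centralBinom (n k : ℕ) :
    delannoyCoeff n k = (n + k).choose (2 * k) * k.centralBinom := by
  rw [delannoyCoeff, Nat.centralBinom_eq_two_mul_choose, Nat.choose_mul (by omega),
    Nat.add_sub_cancel, two_mul, Nat.add_sub_cancel, mul_comm]

theorem delannoyCoeff_eq_zero_of_lt {n k : ℕ} (h : n < k) : delannoyCoeff n k = 0 := by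
  rw [delannoyCoeff, Nat.choose_eq_zero_of_lt h, zero_mul]

theorem delannoyCoeff_zero_right (n : ℕ) : delannoyCoeff n 0 = 1 := by
  simp [delannoyCoeff]

theorem Nat.choose_add_two_add_two (n k : ℕ) :
    (n + 2).choose (k + 2) = n.choose k + 2 * n.choose (k + 1) + n.choose (k + 2) := by
  rw [Nat.choose_succ_succ', Nat.choose_succ_succ', Nat.choose_succ_succ']
  ring

theorem Nat.succ_mul_choose_add_two_mul_choose_succ (n k : ℕ) :
    (k + 1) * (n.choose k + 2 * n.choose (k + 1)) + k * n.choose k = (2 * n + 1) * n.choose k := by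
  rcases le_or_gt k n with hk | hk
  · have h := Nat.choose_succ_right_eq n k
    zify [hk] at h ⊢
    linear_combination 2 * h
  · simp [Nat.choose_eq_zero_of_lt hk, Nat.choose_eq_zero_of_lt (hk.trans (Nat.lt_succ_self k))]

theorem succ_mul_delannoyCoeff_add_two (m k : ℕ) :
    (k + 1) * delannoyCoeff (m + 2) (k + 1) =
      2 * (2 * m + 3) * delannoyCoeff (m + 1) k + (k + 1) * delannoyCoeff m (k + 1) := by
  simp only [delannoyCoeff_eq_choose_mul_centralBinom]
  rw [show m + 2 + (k + 1) = m + k + 1 + 2 by omega, show m + (k + 1) = m + k + 1 by omega,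
    show m + 1 + k = m + k + 1 by omega, show 2 * (k + 1) = 2 * k + 2 by omega,
    Nat.choose_add_two_add_two]
  have hc := Nat.succ_mul_centralBinom_succ k
  have hrow := Nat.succ_mul_choose_add_two_mul_choose_succ (m + k + 1) (2 * k)
  zify at hc hrow ⊢
  linear_combination
    (((m + k + 1).choose (2 * k) : ℤ) + 2 * (m + k + 1).choose (2 * k + 1)) * hc +
      2 * (k.centralBinom : ℤ) * hrow

theorem delannoyCoeff_add_two_sub_delannoyCoeff (m k : ℕ) :
    (delannoyCoeff (m + 2) (k + 1) : ℚ) - delannoyCoeff m (k + 1) =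
      2 * (2 * m + 3) * delannoyCoeff (m + 1) k / (k + 1) := by
  rw [eq_div_iff (by positivity), sub_mul, sub_eq_iff_eq_add, mul_comm, mul_comm _ (k + 1 : ℚ)]
  exact_mod_cast succ_mul_delannoyCoeff_add_two m k

theorem delannoy_eq_sum_delannoyCoeff {n N : ℕ} (h : n ≤ N) (z : ℚ) :
    delannoy n z = ∑ k ∈ range (N + 1), (delannoyCoeff n k : ℚ) * z ^ k := by
  rw [delannoy, ← sum_subset (range_subset_range.2 (by omega : n + 1 ≤ N + 1))]
  · simp [delannoyCoeff]
  · intro k _ hk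
    rw [delannoyCoeff_eq_zero_of_lt (by simpa using hk), Nat.cast_zero, zero_mul]

theorem delannoy_add_two_sub_delannoy (m : ℕ) (z : ℚ) :
    delannoy (m + 2) z - delannoy m z =
      ∑ k ∈ range (m + 2),
        ((delannoyCoeff (m + 2) (k + 1) : ℚ) - delannoyCoeff m (k + 1)) * z ^ (k + 1) := by
  rw [delannoy_eq_sum_delannoyCoeff le_rfl, delannoy_eq_sum_delannoyCoeff (N := m + 2) (by omega),
    ← sum_sub_distrib, sum_range_succ']
  simp [sub_mul, delannoyCoeff_zero_right]

theorem delannoy_schroeder_relation (n : ℕ) (hn : 1 ≤ n) (z : ℚ) :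
    2 * z * (2 * (n : ℚ) + 1) * schroederS n z = delannoy (n + 1) z - delannoy (n - 1) z := by
  obtain ⟨m, rfl⟩ := Nat.exists_eq_add_of_le' hn
  rw [Nat.add_sub_cancel, delannoy_add_two_sub_delannoy, schroederS, mul_sum]
  refine sum_congr rfl fun k _ => ?_
  rw [delannoyCoeff_add_two_sub_delannoyCoeff, delannoyCoeff]
  push_cast
  ring
end

section
/- For n ≥ 1, the sequence F_n(z) = ε^n·S_n(z) (with ε ∈ {−1,1}) satisfies the recurrence (n+2)·F_{n+1}(z) = ε(2n+1)(1+2z)·F_n(z) − (n−1)·F_{n-1}(z). -/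
open Finset

/-! The coefficient `C(n,k) C(n+k,k) / (k+1)` of `z^k` in `S_n` equals `(n+k)! / ((n-k)! (k+1)! k!)`,
and `(n+k)! / (n-k)!` is a polynomial in `n` that vanishes at the natural numbers `n < k`. The
recurrence can therefore be checked coefficientwise as a polynomial identity in `n`, in which the
shifts `n ↦ n ± 1` only multiply by two linear factors, and all three sums may be truncated at a
common length. -/

/-- `(x + k)(x + k - 1) ⋯ (x - k + 1)`, which is `(x + k)! / (x - k)!` at natural `x ≥ k`. -/
def fallingProd (k : ℕ) (x : ℚ) : ℚ :=
  ∏ i ∈ range k, (x + i + 1) * (x - i)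

lemma fallingProd_succ (k : ℕ) (x : ℚ) :
    fallingProd (k + 1) x = fallingProd k x * ((x + k + 1) * (x - k)) :=
  prod_range_succ _ _

lemma fallingProd_succ_add_one (k : ℕ) (x : ℚ) :
    fallingProd (k + 1) (x + 1) = fallingProd k x * ((x + k + 1) * (x + k + 2)) := by
  induction k with
  | zero => simp [fallingProd]; ring
  | succ k ih => rw [fallingProd_succ, ih, fallingProd_succ]; push_cast; ring

lemma fallingProd_succ_sub_one (k : ℕ) (x : ℚ) :
    fallingProd (k + 1) (x - 1) = fallingProd k x * ((x - k - 1) * (x - k)) := by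
  induction k with
  | zero => simp [fallingProd]; ring
  | succ k ih => rw [fallingProd_succ, ih, fallingProd_succ]; push_cast; ring

lemma fallingProd_natCast (n k : ℕ) :
    fallingProd k n = n.choose k * (n + k).choose k * k.factorial * k.factorial := by
  have asc : ∏ i ∈ range k, ((n : ℚ) + i + 1) = k.factorial * (n + k).choose k := by
    have h : ((n + 1).ascFactorial k : ℚ) = k.factorial * (n + k).choose k := by
      rw [Nat.ascFactorial_eq_factorial_mul_choose, Nat.cast_mul]
    rw [← h, Nat.ascFactorial_eq_prod_range]
    push_cast
    exact prod_congr rfl fun i _ => by ring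
  have desc : ∏ i ∈ range k, ((n : ℚ) - i) = k.factorial * n.choose k := by
    rw [← descPochhammer_eval_eq_prod_range, descPochhammer_eval_eq_descFactorial,
      Nat.descFactorial_eq_factorial_mul_choose, Nat.cast_mul]
  rw [fallingProd, prod_mul_distrib, asc, desc]
  ring

def schroederCoeff (k : ℕ) (x : ℚ) : ℚ :=
  fallingProd k x / ((k + 1).factorial * k.factorial)

lemma schroederCoeff_zero (x : ℚ) : schroederCoeff 0 x = 1 := by
  simp [schroederCoeff, fallingProd]

lemma schroederCoeff_natCast (n k : ℕ) :
    schroederCoeff k n = n.choose k * (n + k).choose k / (k + 1) := by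
  rw [schroederCoeff, fallingProd_natCast, Nat.factorial_succ]
  have : (k.factorial : ℚ) ≠ 0 := by positivity
  push_cast
  field_simp

lemma schroederCoeff_three_term (k : ℕ) (x : ℚ) :
    (x + 2) * schroederCoeff (k + 1) (x + 1) + (x - 1) * schroederCoeff (k + 1) (x - 1) =
      (2 * x + 1) * schroederCoeff (k + 1) x + 2 * (2 * x + 1) * schroederCoeff k x := by
  rw [schroederCoeff, schroederCoeff, schroederCoeff, schroederCoeff, fallingProd_succ_add_one,
    fallingProd_succ_sub_one, fallingProd_succ, Nat.factorial_succ (k + 1), Nat.factorial_succ k]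
  have : (k.factorial : ℚ) ≠ 0 := by positivity
  push_cast
  field_simp
  ring

def schroederTrunc (N : ℕ) (x z : ℚ) : ℚ :=
  ∑ k ∈ range N, schroederCoeff k x * z ^ k

lemma schroederS_eq_schroederTrunc {n N : ℕ} (h : n < N) (z : ℚ) :
    schroederS n z = schroederTrunc N n z := by
  rw [schroederS, schroederTrunc]
  refine sum_subset (range_subset_range.mpr h) (fun k _ hk => ?_) |>.trans
    (sum_congr rfl fun k _ => ?_)
  · rw [mem_range, not_lt] at hk
    rw [Nat.choose_eq_zero_of_lt hk]
    simp
  · rw [schroederCoeff_natCast]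
    ring

lemma schroederTrunc_three_term (N : ℕ) (x z : ℚ) :
    (x + 2) * schroederTrunc (N + 1) (x + 1) z + (x - 1) * schroederTrunc (N + 1) (x - 1) z =
      (2 * x + 1) * (schroederTrunc (N + 1) x z + 2 * z * schroederTrunc N x z) := by
  have termwise : ∀ k ∈ range N,
      (x + 2) * (schroederCoeff (k + 1) (x + 1) * z ^ (k + 1)) +
          (x - 1) * (schroederCoeff (k + 1) (x - 1) * z ^ (k + 1)) =
        (2 * x + 1) * (schroederCoeff (k + 1) x * z ^ (k + 1)) +
          (2 * x + 1) * (2 * z * (schroederCoeff k x * z ^ k)) := fun k _ => by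
    linear_combination z ^ (k + 1) * schroederCoeff_three_term k x
  have tails := sum_congr rfl termwise
  rw [sum_add_distrib, sum_add_distrib, ← mul_sum, ← mul_sum, ← mul_sum, ← mul_sum, ← mul_sum]
    at tails
  rw [schroederTrunc, schroederTrunc, schroederTrunc, schroederTrunc, sum_range_succ',
    sum_range_succ', sum_range_succ', schroederCoeff_zero, schroederCoeff_zero, schroederCoeff_zero]
  linear_combination tails

theorem schroederS_recurrence (n : ℕ) (z : ℚ) :
    ((n : ℚ) + 3) * schroederS (n + 2) z =
      (2 * n + 3) * (1 + 2 * z) * schroederS (n + 1) z - n * schroederS n z := by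
  have key := schroederTrunc_three_term (n + 2) (n + 1 : ℕ) z
  rw [show ((n + 1 : ℕ) : ℚ) + 1 = (n + 2 : ℕ) by push_cast; ring,
    show ((n + 1 : ℕ) : ℚ) - 1 = n by push_cast; ring,
    ← schroederS_eq_schroederTrunc (by omega : n + 2 < n + 3),
    ← schroederS_eq_schroederTrunc (by omega : n < n + 3),
    ← schroederS_eq_schroederTrunc (by omega : n + 1 < n + 3),
    ← schroederS_eq_schroederTrunc (by omega : n + 1 < n + 2)] at key
  push_cast at key
  linear_combination key

theorem F_recurrence (ε : ℚ) (hε : ε = 1 ∨ ε = -1) (z : ℚ)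
    (F : ℕ → ℚ) (hF : ∀ n, F n = ε ^ n * schroederS n z) (n : ℕ) (hn : 1 ≤ n) :
    ((n : ℚ) + 2) * F (n + 1) =
      ε * (2 * (n : ℚ) + 1) * (1 + 2 * z) * F n - ((n : ℚ) - 1) * F (n - 1) := by
  obtain ⟨m, rfl⟩ : ∃ m, n = m + 1 := ⟨n - 1, by omega⟩
  have hε2 : ε ^ 2 = 1 := by rcases hε with rfl | rfl <;> norm_num
  rw [hF, hF, hF, Nat.add_sub_cancel]
  push_cast
  linear_combination ε ^ m * schroederS_recurrence m z +
    ((m + 3) * schroederS (m + 2) z - (2 * m + 3) * (1 + 2 * z) * schroederS (m + 1) z) * ε ^ m *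
      hε2
end

section
/- For any odd prime p, any ε ∈ {−1,1}, and any integer z, the identity 2z·Σ_{k=0}^{p-1} (2k+1)·ε^k·S_k(z) = D_p(z) + ε·D_{p-1}(z) − 1 − ε holds. -/
open Finset

/-!
Write `c(n, k) = C(n, k) C(n + k, k)` for the coefficients of `D_n`. Comparing neighbouring
coefficients gives `(k + 1)² c(n + 1, k + 1) = (n + k + 2)(n + k + 1) c(n, k)` and
`(k + 1)² c(n - 1, k + 1) = (n - k - 1)(n - k) c(n, k)`; the difference of the two right-hand
factors is `2(k + 1)(2n + 1)`, whence `D_{n+1} - D_{n-1} = 2z(2n + 1) S_n`. Since `ε² = 1`, the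
sum of these differences weighted by `ε^n` telescopes (the `n = 0` term being `2z = D_1 - 1`), and
for `p - 1` even the surviving signs `ε^(p-1)`, `ε^p` are `1` and `ε`.
-/

section
variable {R : Type*} [CommRing R]

theorem cast_choose_succ_mul (n k : ℕ) :
    (n.choose (k + 1) : R) * (k + 1) = n.choose k * (n - k) := by
  rcases le_or_gt k n with hk | hk
  · have h := congrArg (Nat.cast : ℕ → R) (Nat.choose_succ_right_eq n k)
    push_cast [Nat.cast_sub hk] at h
    exact h
  · simp [Nat.choose_eq_zero_of_lt hk, Nat.choose_eq_zero_of_lt (Nat.lt_succ_of_lt hk)]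

theorem cast_choose_mul_succ (n k : ℕ) :
    (n.choose k : R) * (n + 1) = (n + 1).choose k * (n + 1 - k) := by
  rcases le_or_gt k (n + 1) with hk | hk
  · have h := congrArg (Nat.cast : ℕ → R) (Nat.choose_mul_succ_eq n k)
    push_cast [Nat.cast_sub hk] at h
    exact h
  · simp [Nat.choose_eq_zero_of_lt hk, Nat.choose_eq_zero_of_lt (Nat.lt_of_succ_lt hk)]

theorem sq_mul_choose_mul_choose_succ (n k : ℕ) :
    ((k : R) + 1) ^ 2 * ((n + 1).choose (k + 1) * (n + 1 + (k + 1)).choose (k + 1)) =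
      ((n : R) + k + 2) * (n + k + 1) * (n.choose k * (n + k).choose k) := by
  have h1 := congrArg (Nat.cast : ℕ → R) (Nat.add_one_mul_choose_eq n k)
  have h2 := congrArg (Nat.cast : ℕ → R) (Nat.add_one_mul_choose_eq (n + k + 1) k)
  have h3 := cast_choose_mul_succ (R := R) (n + k) k
  rw [show n + 1 + (k + 1) = n + k + 1 + 1 by ring]
  push_cast at h1 h2 h3 ⊢
  linear_combination (-((k : R) + 1) * (n + k + 1 + 1).choose (k + 1)) * h1
    - ((n : R) + 1) * n.choose k * h2 - ((n : R) + k + 2) * n.choose k * h3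

theorem sq_mul_choose_succ_mul_choose (n k : ℕ) :
    ((k : R) + 1) ^ 2 * (n.choose (k + 1) * (n + (k + 1)).choose (k + 1)) =
      ((n : R) - k) * (n + 1 - k) * ((n + 1).choose k * (n + 1 + k).choose k) := by
  have h1 := cast_choose_succ_mul (R := R) n k
  have h2 := cast_choose_succ_mul (R := R) (n + k + 1) k
  have h3 := cast_choose_mul_succ (R := R) n k
  rw [show n + (k + 1) = n + k + 1 by ring, show n + 1 + k = n + k + 1 by ring]
  push_cast at h1 h2 h3 ⊢
  linear_combination ((k : R) + 1) * (n + k + 1).choose (k + 1) * h1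
    + (n.choose k * (n - k)) * h2 + ((n : R) - k) * (n + k + 1).choose k * h3

end

theorem add_one_mul_choose_mul_choose_sub {R : Type*} [CommRing R] [IsDomain R] [CharZero R]
    (n k : ℕ) :
    ((k : R) + 1) * ((n + 2).choose (k + 1) * (n + 2 + (k + 1)).choose (k + 1)
        - n.choose (k + 1) * (n + (k + 1)).choose (k + 1)) =
      2 * (2 * n + 3) * ((n + 1).choose k * (n + 1 + k).choose k) := by
  have hk : (k : R) + 1 ≠ 0 := by exact_mod_cast Nat.succ_ne_zero k
  refine mul_left_cancel₀ hk ?_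
  have hA := sq_mul_choose_mul_choose_succ (R := R) (n + 1) k
  have hB := sq_mul_choose_succ_mul_choose (R := R) n k
  push_cast at hA
  linear_combination hA - hB

theorem delannoy_eq_sum_range_of_le {n N : ℕ} (h : n ≤ N) (z : ℚ) :
    delannoy n z = ∑ k ∈ range (N + 1), (n.choose k : ℚ) * ((n + k).choose k : ℚ) * z ^ k := by
  refine sum_subset (range_subset_range.2 (by omega)) fun k _ hk => ?_
  simp [Nat.choose_eq_zero_of_lt (show n < k by simpa using hk)]

theorem delannoy_add_two_sub (n : ℕ) (z : ℚ) :
    delannoy (n + 2) z - delannoy n z = 2 * z * (2 * n + 3) * schroederS (n + 1) z := by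
  rw [delannoy, delannoy_eq_sum_range_of_le (show n ≤ n + 2 by omega), ← sum_sub_distrib,
    sum_range_succ', schroederS, mul_sum]
  simp only [Nat.choose_zero_right, add_zero, pow_zero, sub_self]
  refine sum_congr rfl fun k _ => ?_
  have key := add_one_mul_choose_mul_choose_sub (R := ℚ) n k
  field_simp
  linear_combination z ^ (k + 1) * key

theorem two_mul_sum_alternating_schroederS {ε : ℚ} (hε : ε ^ 2 = 1) (z : ℚ) (N : ℕ) :
    2 * z * ∑ k ∈ range (N + 1), (2 * (k : ℚ) + 1) * ε ^ k * schroederS k z =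
      ε ^ N * delannoy (N + 1) z + ε ^ (N + 1) * delannoy N z - 1 - ε := by
  induction N with
  | zero => simp [schroederS, delannoy, sum_range_succ]; ring
  | succ N ih =>
    rw [sum_range_succ, mul_add, ih]
    push_cast
    linear_combination -ε ^ (N + 1) * delannoy_add_two_sub N z - ε ^ N * delannoy (N + 1) z * hε

theorem telescoping_identity_general (p : ℕ) (hodd : Odd p)
    (ε : ℚ) (hε : ε = 1 ∨ ε = -1) (z : ℤ) :
    2 * (z : ℚ) * ∑ k ∈ Finset.range p, (2 * (k : ℚ) + 1) * ε ^ k * schroederS k (z : ℚ) =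
      delannoy p (z : ℚ) + ε * delannoy (p - 1) (z : ℚ) - 1 - ε := by
  obtain ⟨m, rfl⟩ := hodd
  have hε_even : ε ^ (2 * m) = 1 := by rcases hε with rfl | rfl <;> simp
  rw [two_mul_sum_alternating_schroederS (by rcases hε with rfl | rfl <;> norm_num),
    pow_succ, hε_even, Nat.add_sub_cancel]
  ring

theorem telescoping_identity (p : ℕ) (hp : p.Prime) (hodd : Odd p)
    (ε : ℚ) (hε : ε = 1 ∨ ε = -1) (z : ℤ) :
    2 * (z : ℚ) * ∑ k ∈ Finset.range p, (2 * (k : ℚ) + 1) * ε ^ k * schroederS k (z : ℚ) =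
      delannoy p (z : ℚ) + ε * delannoy (p - 1) (z : ℚ) - 1 - ε :=
  telescoping_identity_general p hodd ε hε z
end

section
/- For any odd prime p, any ε ∈ {−1,1}, and any integer z with gcd(p, z) = 1, Σ_{k=0}^{p-1} (2k+1)·ε^k·S_k(z) ≡ 1 (mod p). -/
open Finset

/-!
Since `C(k,j) C(k+j,j) / (j+1) = C(k+j,2j) Cat_j`, exchanging the order of summation turns
the sum into `∑_{j<p} Cat_j W_j z^j` with `W_j = ∑_{k<p} (2k+1) ε^k C(k+j,2j)`. Both column
sums have closed forms (by induction on `p` and Pascal's rule): `Cat_j W_j` is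
`C(p,j+1) C(p+j,j+1)` for `ε = 1` and `(-1)^(p+1) C(p,j+1) C(p+j,j)` for `ε = -1`. Modulo `p`
every term with `j + 1 < p` vanishes because `p ∣ C(p,j+1)`, and the last term is
`C(2p-1,p-1) z^(p-1) ≡ 1` by Lucas and Fermat.
-/

namespace Nat

theorem two_mul_add_one_mul_choose_add {R : Type*} [CommRing R] (n j : ℕ) :
    (2 * j + 1 : R) * (n + j).choose (2 * j + 1) = (n - j : R) * (n + j).choose (2 * j) := by
  rcases le_or_gt j n with h | h
  · have hsucc := choose_succ_right_eq (n + j) (2 * j)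
    rw [show n + j - 2 * j = n - j by omega] at hsucc
    have hsucc' := congrArg (Nat.cast : ℕ → R) hsucc
    push_cast [h] at hsucc'
    linear_combination hsucc'
  · simp [choose_eq_zero_of_lt (show n + j < 2 * j by omega),
      choose_eq_zero_of_lt (show n + j < 2 * j + 1 by omega)]

theorem mul_sum_range_choose_add_two_mul {R : Type*} [CommRing R] (n j : ℕ) :
    (j + 1 : R) * ∑ k ∈ range n, (2 * k + 1 : R) * (k + j).choose (2 * j)
      = n * ((2 * j + 1) * (n + j).choose (2 * j + 1)) := by
  induction n with
  | zero => simp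
  | succ n ih =>
    rw [sum_range_succ, mul_add, ih, show n + 1 + j = n + j + 1 by ring, choose_succ_succ']
    push_cast
    linear_combination (-1 : R) * two_mul_add_one_mul_choose_add (R := R) n j

theorem sum_range_neg_one_pow_choose_add_two_mul {R : Type*} [CommRing R] (n j : ℕ) :
    ∑ k ∈ range n, (2 * k + 1 : R) * (-1) ^ k * (k + j).choose (2 * j)
      = (-1) ^ (n + 1) * ((2 * j + 1) * (n + j).choose (2 * j + 1)) := by
  induction n with
  | zero => simp [choose_eq_zero_of_lt (show j < 2 * j + 1 by omega)]
  | succ n ih =>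
    rw [sum_range_succ, ih, show n + 1 + j = n + j + 1 by ring, choose_succ_succ']
    push_cast
    linear_combination (-2 * (-1 : R) ^ n) * two_mul_add_one_mul_choose_add (R := R) n j

theorem catalan_mul_choose_add (n j : ℕ) :
    catalan j * ((2 * j + 1) * (n + j).choose (2 * j + 1))
      = n.choose (j + 1) * (n + j).choose j := by
  refine Nat.eq_of_mul_eq_mul_left j.succ_pos ?_
  have hmul := choose_mul (n := n + j) (show j ≤ 2 * j + 1 by omega)
  rw [show n + j - j = n by omega, show 2 * j + 1 - j = j + 1 by omega] at hmul
  calc (j + 1) * (catalan j * ((2 * j + 1) * (n + j).choose (2 * j + 1)))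
      = (2 * j + 1) * (2 * j).choose j * (n + j).choose (2 * j + 1) := by
        rw [← mul_assoc, succ_mul_catalan_eq_centralBinom, centralBinom]; ring
    _ = (j + 1) * ((n + j).choose (2 * j + 1) * (2 * j + 1).choose j) := by
        rw [add_one_mul_choose_eq, choose_symm_half]; ring
    _ = (j + 1) * (n.choose (j + 1) * (n + j).choose j) := by rw [hmul]; ring

theorem choose_mul_choose_add (k j : ℕ) :
    k.choose j * (k + j).choose j = (k + j).choose (2 * j) * ((j + 1) * catalan j) := by
  have hmul := choose_mul (n := k + j) (show j ≤ 2 * j by omega)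
  rw [show k + j - j = k by omega, show 2 * j - j = j by omega] at hmul
  rw [succ_mul_catalan_eq_centralBinom, centralBinom, hmul, mul_comm]

theorem catalan_mul_sum_range_choose_add_two_mul {K : Type*} [Field K] [CharZero K] (n j : ℕ) :
    (catalan j : K) * ∑ k ∈ range n, (2 * k + 1 : K) * (k + j).choose (2 * j)
      = n.choose (j + 1) * (n + j).choose (j + 1) := by
  have hsum := mul_sum_range_choose_add_two_mul (R := K) n j
  have hcat : (catalan j * ((2 * j + 1) * (n + j).choose (2 * j + 1)) : K)
      = n.choose (j + 1) * (n + j).choose j := by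
    exact_mod_cast catalan_mul_choose_add n j
  have hsucc := choose_succ_right_eq (n + j) j
  rw [show n + j - j = n by omega] at hsucc
  have hsucc' : ((n + j).choose (j + 1) * (j + 1) : K) = (n + j).choose j * n := by
    exact_mod_cast hsucc
  refine mul_left_cancel₀ (Nat.cast_add_one_ne_zero j : (j + 1 : K) ≠ 0) ?_
  linear_combination (catalan j : K) * hsum + (n : K) * hcat - (n.choose (j + 1) : K) * hsucc'

theorem catalan_mul_sum_range_neg_one_pow_choose_add_two_mul {R : Type*} [CommRing R] (n j : ℕ) :
    (catalan j : R) * ∑ k ∈ range n, (2 * k + 1 : R) * (-1) ^ k * (k + j).choose (2 * j)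
      = (-1) ^ (n + 1) * (n.choose (j + 1) * (n + j).choose j) := by
  have hcat := congrArg (Nat.cast : ℕ → R) (catalan_mul_choose_add n j)
  push_cast at hcat
  rw [sum_range_neg_one_pow_choose_add_two_mul]
  linear_combination (-1 : R) ^ (n + 1) * hcat

theorem choose_prime_add_modEq_one {p j : ℕ} [Fact p.Prime] (hj : j < p) :
    (p + j).choose j ≡ 1 [MOD p] := by
  have hp := (Fact.out : p.Prime).pos
  simpa [add_mod_left, mod_eq_of_lt hj, div_eq_of_lt hj, add_div_left _ hp]
    using Choose.choose_modEq_choose_mod_mul_choose_div_nat (n := p + j) (k := j) (p := p)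

end Nat

theorem schroederS_eq_sum_range {k n : ℕ} (hk : k < n) (z : ℚ) :
    schroederS k z = ∑ j ∈ range n, ((k + j).choose (2 * j) * catalan j : ℚ) * z ^ j := by
  rw [schroederS, sum_subset (range_subset_range.mpr hk)]
  · refine sum_congr rfl fun j _ => ?_
    have hcoeff : (k.choose j * (k + j).choose j : ℚ)
        = (k + j).choose (2 * j) * ((j + 1) * catalan j) := by
      exact_mod_cast Nat.choose_mul_choose_add k j
    rw [hcoeff]
    field_simp
  · intro j _ hj
    rw [mem_range, not_lt] at hj
    simp [Nat.choose_eq_zero_of_lt (show k < j by omega)]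

theorem sum_range_mul_schroederS (w : ℕ → ℚ) (n : ℕ) (z : ℚ) :
    ∑ k ∈ range n, w k * schroederS k z
      = ∑ j ∈ range n,
          (catalan j * ∑ k ∈ range n, w k * (k + j).choose (2 * j)) * z ^ j := by
  calc _ = ∑ k ∈ range n, ∑ j ∈ range n,
          w k * (((k + j).choose (2 * j) * catalan j : ℚ) * z ^ j) := by
        refine sum_congr rfl fun k hk => ?_
        rw [schroederS_eq_sum_range (mem_range.mp hk), mul_sum]
    _ = _ := by
        rw [sum_comm]
        refine sum_congr rfl fun j _ => ?_
        rw [mul_sum, sum_mul]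
        exact sum_congr rfl fun k _ => by ring

theorem ZMod.sum_range_mul_pow_eq_one {p : ℕ} [Fact p.Prime] {x : ZMod p} (hx : x ≠ 0)
    {a : ℕ → ZMod p} (ha : ∀ j, j + 1 < p → a j = 0) (ha' : a (p - 1) = 1) :
    ∑ j ∈ range p, a j * x ^ j = 1 := by
  obtain ⟨q, rfl⟩ : ∃ q, p = q + 1 :=
    Nat.exists_eq_add_one_of_ne_zero (Fact.out : p.Prime).ne_zero
  rw [sum_range_succ, sum_eq_zero fun j hj => by rw [ha j (by simpa using hj), zero_mul]]
  rw [Nat.add_sub_cancel] at ha'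
  simpa [ha'] using ZMod.pow_card_sub_one_eq_one hx

theorem sum_range_weighted_schroederS_eq {p : ℕ} [Fact p.Prime] (hodd : Odd p) {ε : ℚ}
    (hε : ε = 1 ∨ ε = -1) (z : ℚ) :
    ∃ b : ℕ → ℕ, b (p - 1) ≡ 1 [MOD p] ∧
      ∑ k ∈ range p, (2 * (k : ℚ) + 1) * ε ^ k * schroederS k z
        = ∑ j ∈ range p, (p.choose (j + 1) * b j : ℚ) * z ^ j := by
  have hp : p.Prime := Fact.out
  have hp1 : p - 1 < p := Nat.sub_lt hp.pos one_pos
  rw [sum_range_mul_schroederS]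
  rcases hε with rfl | rfl
  · refine ⟨fun j => (p + j).choose (j + 1), ?_, ?_⟩
    · show (p + (p - 1)).choose (p - 1 + 1) ≡ 1 [MOD p]
      rw [Nat.sub_add_cancel hp.one_le, Nat.choose_symm_add]
      exact Nat.choose_prime_add_modEq_one hp1
    · simp_rw [one_pow, mul_one, Nat.catalan_mul_sum_range_choose_add_two_mul]
  · refine ⟨fun j => (p + j).choose j, Nat.choose_prime_add_modEq_one hp1, ?_⟩
    simp_rw [Nat.catalan_mul_sum_range_neg_one_pow_choose_add_two_mul, hodd.add_one.neg_one_pow,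
      one_mul]

theorem exists_sum_range_choose_mul_pow_sub_one_eq_mul {p : ℕ} [Fact p.Prime] {z : ℤ}
    (hz : (z : ZMod p) ≠ 0) {b : ℕ → ℕ} (hb : b (p - 1) ≡ 1 [MOD p]) :
    ∃ m : ℤ, ∑ j ∈ range p, (p.choose (j + 1) * b j : ℚ) * (z : ℚ) ^ j - 1 = p * m := by
  have hp : p.Prime := Fact.out
  have hmod : ((∑ j ∈ range p, (p.choose (j + 1) * b j : ℤ) * z ^ j : ℤ) : ZMod p) = 1 := by
    push_cast
    refine ZMod.sum_range_mul_pow_eq_one hz (fun j hj => ?_) ?_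
    · rw [(ZMod.natCast_eq_zero_iff _ _).mpr (hp.dvd_choose_self j.succ_ne_zero hj), zero_mul]
    · rw [Nat.sub_add_cancel hp.one_le, Nat.choose_self, Nat.cast_one, one_mul]
      exact_mod_cast (ZMod.natCast_eq_natCast_iff _ _ _).mpr hb
  obtain ⟨m, hm⟩ := (ZMod.intCast_eq_intCast_iff_dvd_sub 1 _ p).mp (by rw [hmod, Int.cast_one])
  exact ⟨m, by exact_mod_cast hm⟩

theorem sum_linear_weight_S_congr (p : ℕ) (hp : p.Prime) (hodd : Odd p)
    (ε : ℚ) (hε : ε = 1 ∨ ε = -1) (z : ℤ) (hz : Int.gcd (p : ℤ) z = 1) :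
    ∃ m : ℤ, (∑ k ∈ Finset.range p, (2 * (k : ℚ) + 1) * ε ^ k * schroederS k (z : ℚ)) - 1
      = (p : ℚ) * m := by
  have : Fact p.Prime := ⟨hp⟩
  obtain ⟨b, hb, hsum⟩ := sum_range_weighted_schroederS_eq hodd hε (z : ℚ)
  rw [hsum]
  exact exists_sum_range_choose_mul_pow_sub_one_eq_mul
    (ZMod.ne_zero_of_gcd_eq_one hp (by rwa [Int.gcd_comm])) hb
end

section
/- For any odd prime p, any ε ∈ {−1,1}, and any integer z with gcd(p, z(z+1)) = 1, Σ_{k=0}^{p-1} (2k+1)·ε^k·s_k(z) ≡ 0 (mod p). -/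
open Finset

/-!
Put `D_n(x, y) = ∑_{i+j=n} C(n,i)² x^i y^j`, so that `D_n(z, z+1)` is the central Delannoy
polynomial, and write `s_{n+1}(z)` in the same basis `z^i (z+1)^j` with Narayana coefficients.
Comparing coefficients gives `D_{n+2} = (y - x)² D_n + 2(2n+3) x y s_{n+1}`, so for `η² = 1` the
sum `2z(z+1) ∑_{k<p} (2k+1) η^k s_k(z)` telescopes to `η^{p-1} (D_p + η D_{p-1}) - (D_1 + η D_0)`.
Modulo `p`, `D_p ≡ z^p + (z+1)^p ≡ 2z + 1`, and `C(p-1,k) ≡ (-1)^k` turns `D_{p-1}` into the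
geometric sum `(z+1)^p - z^p ≡ 1`; so the telescoped value vanishes, and `2z(z+1)` is prime to `p`.
-/

theorem choose_neighbors_relation (i j : ℕ) :
    ((i : ℤ) + j) * ((i + j).choose i : ℤ) ^ 2
      = (i + j).choose i * ((i + j).choose (i + 1) + (i + j).choose (j + 1))
        + ((i : ℤ) + j + 2) * (i + j).choose (i + 1) * (i + j).choose (j + 1) := by
  have hb : ((i + j).choose (i + 1) : ℤ) * (i + 1) = (i + j).choose i * j := by
    exact_mod_cast by simpa using Nat.choose_succ_right_eq (i + j) i
  have hc : ((i + j).choose (j + 1) : ℤ) * (j + 1) = (i + j).choose i * i := by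
    rw [Nat.choose_symm_add]
    exact_mod_cast by simpa [add_comm i j] using Nat.choose_succ_right_eq (j + i) j
  refine mul_left_cancel₀ (show ((i : ℤ) + 1) * (j + 1) ≠ 0 by positivity) ?_
  linear_combination (-((i + j).choose i : ℤ) * (j + 1) - (i + j + 2) * (i + j).choose i * i) * hb
    + (-((i + j).choose i : ℤ) * (i + 1) - (i + j + 2) * (i + j).choose (i + 1) * (i + 1)) * hc

theorem choose_succ_add_left (i j : ℕ) :
    (i + j + 1).choose i = (i + j).choose i + (i + j).choose (j + 1) := by
  rw [Nat.choose_symm_of_eq_add (add_assoc i j 1), Nat.choose_succ_succ, ← Nat.choose_symm_add]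

theorem choose_succ_add_succ (i j : ℕ) :
    (i + j + 1).choose (i + 1) = (i + j).choose i + (i + j).choose (i + 1) :=
  Nat.choose_succ_succ _ _

/-- The Narayana number `N(i + j + 1, i + 1)`, written without division (see `narayanaCoeff_mul`). -/
def narayanaCoeff (i j : ℕ) : ℤ :=
  ((i + j).choose i : ℤ) ^ 2 - (i + j).choose (i + 1) * (i + j).choose (j + 1)

theorem narayanaCoeff_mul (i j : ℕ) :
    ((i + j + 1 : ℕ) : ℤ) * narayanaCoeff i j
      = (i + j + 1).choose (i + 1) * (i + j + 1).choose i := by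
  rw [narayanaCoeff, choose_succ_add_left, choose_succ_add_succ]
  push_cast
  linear_combination choose_neighbors_relation i j

theorem choose_add_two_sq (i j : ℕ) :
    ((i + j + 2).choose (i + 1) : ℤ) ^ 2
      = ((i + j).choose (i + 1) : ℤ) ^ 2 - 2 * (i + j).choose i ^ 2 + (i + j).choose (j + 1) ^ 2
        + 2 * (2 * (i + j : ℕ) + 3) * narayanaCoeff i j := by
  rw [Nat.choose_succ_succ, choose_succ_add_left, choose_succ_add_succ, narayanaCoeff]
  push_cast
  linear_combination (-4) * choose_neighbors_relation i j

section Forms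

variable {R : Type*} [CommRing R]

theorem sum_antidiagonal_pow_mul_pow_mul_sub (x y : R) (n : ℕ) :
    (∑ ij ∈ antidiagonal n, x ^ ij.1 * y ^ ij.2) * (y - x) = y ^ (n + 1) - x ^ (n + 1) := by
  have h := geom_sum₂_mul x y (n + 1)
  simp only [Nat.add_sub_cancel] at h
  rw [Nat.sum_antidiagonal_eq_sum_range_succ (fun i j => x ^ i * y ^ j)]
  linear_combination -h

def delannoyForm (n : ℕ) (x y : R) : R :=
  ∑ ij ∈ antidiagonal n, (n.choose ij.1 : R) ^ 2 * x ^ ij.1 * y ^ ij.2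

def narayanaForm (n : ℕ) (x y : R) : R :=
  ∑ ij ∈ antidiagonal n, (narayanaCoeff ij.1 ij.2 : R) * x ^ ij.1 * y ^ ij.2

@[simp, norm_cast]
theorem Int.cast_narayanaForm (n : ℕ) (x y : ℤ) :
    ((narayanaForm n x y : ℤ) : R) = narayanaForm n (x : R) (y : R) := by
  simp [narayanaForm]

@[simp]
theorem delannoyForm_zero (x y : R) : delannoyForm 0 x y = 1 := by
  simp [delannoyForm]

@[simp]
theorem delannoyForm_one (x y : R) : delannoyForm 1 x y = x + y := by
  simp [delannoyForm, Nat.sum_antidiagonal_succ]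
  ring

theorem delannoyForm_comm (n : ℕ) (x y : R) : delannoyForm n x y = delannoyForm n y x := by
  rw [delannoyForm, ← Nat.sum_antidiagonal_swap]
  refine sum_congr rfl fun ij hij => ?_
  rw [Nat.choose_symm_of_eq_add (mem_antidiagonal.mp hij).symm]
  simp only [Prod.fst_swap, Prod.snd_swap]
  ring

theorem sq_mul_delannoyForm (n : ℕ) (x y : R) :
    y ^ 2 * delannoyForm n x y
      = y ^ (n + 2) + x * y * ∑ ij ∈ antidiagonal n,
          (n.choose (ij.1 + 1) : R) ^ 2 * x ^ ij.1 * y ^ ij.2 := by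
  have h := Nat.sum_antidiagonal_succ' (n := n)
    (f := fun ij => (n.choose ij.1 : R) ^ 2 * x ^ ij.1 * y ^ ij.2)
  rw [Nat.sum_antidiagonal_succ] at h
  simp only [Nat.choose_zero_right, Nat.choose_succ_self, Nat.cast_one, Nat.cast_zero, one_pow,
    zero_pow two_ne_zero, pow_zero, one_mul, mul_one, zero_mul, zero_add] at h
  have hl : y ^ 2 * delannoyForm n x y
      = y * ∑ ij ∈ antidiagonal n, (n.choose ij.1 : R) ^ 2 * x ^ ij.1 * y ^ (ij.2 + 1) := by
    rw [delannoyForm, mul_sum, mul_sum]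
    exact sum_congr rfl fun _ _ => by ring
  have hr : x * y * ∑ ij ∈ antidiagonal n, (n.choose (ij.1 + 1) : R) ^ 2 * x ^ ij.1 * y ^ ij.2
      = y * ∑ ij ∈ antidiagonal n, (n.choose (ij.1 + 1) : R) ^ 2 * x ^ (ij.1 + 1) * y ^ ij.2 := by
    rw [mul_sum, mul_sum]
    exact sum_congr rfl fun _ _ => by ring
  rw [hl, hr, ← h]
  ring

theorem delannoyForm_add_two_eq_pow_add_pow_add (n : ℕ) (x y : R) :
    delannoyForm (n + 2) x y
      = x ^ (n + 2) + y ^ (n + 2) + x * y * ∑ ij ∈ antidiagonal n,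
          ((n + 2).choose (ij.1 + 1) : R) ^ 2 * x ^ ij.1 * y ^ ij.2 := by
  rw [delannoyForm, Nat.sum_antidiagonal_succ, Nat.sum_antidiagonal_succ', mul_sum]
  simp only [Nat.choose_zero_right, Nat.choose_self, Nat.cast_one, one_pow, pow_zero, one_mul,
    mul_one]
  rw [sum_congr rfl fun ij _ =>
    show _ = x * y * (((n + 2).choose (ij.1 + 1) : R) ^ 2 * x ^ ij.1 * y ^ ij.2) by ring]
  ring

theorem delannoyForm_add_two (n : ℕ) (x y : R) :
    delannoyForm (n + 2) x y
      = (y - x) ^ 2 * delannoyForm n x y + 2 * (2 * n + 3) * x * y * narayanaForm n x y := by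
  have hy := sq_mul_delannoyForm n x y
  have hx := sq_mul_delannoyForm n y x
  rw [← delannoyForm_comm, ← Nat.sum_antidiagonal_swap] at hx
  simp only [Prod.fst_swap, Prod.snd_swap] at hx
  have hcoeff : ∑ ij ∈ antidiagonal n, ((n + 2).choose (ij.1 + 1) : R) ^ 2 * x ^ ij.1 * y ^ ij.2
      = ∑ ij ∈ antidiagonal n, (n.choose (ij.1 + 1) : R) ^ 2 * x ^ ij.1 * y ^ ij.2
        - 2 * delannoyForm n x y
        + ∑ ij ∈ antidiagonal n, (n.choose (ij.2 + 1) : R) ^ 2 * y ^ ij.2 * x ^ ij.1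
        + 2 * (2 * n + 3) * narayanaForm n x y := by
    rw [delannoyForm, narayanaForm, mul_sum, mul_sum, ← sum_sub_distrib, ← sum_add_distrib,
      ← sum_add_distrib]
    refine sum_congr rfl fun ij hij => ?_
    obtain ⟨i, j⟩ := ij
    obtain rfl : i + j = n := mem_antidiagonal.mp hij
    have h := congrArg (Int.cast : ℤ → R) (choose_add_two_sq i j)
    push_cast at h ⊢
    linear_combination x ^ i * y ^ j * h
  rw [delannoyForm_add_two_eq_pow_add_pow_add, hcoeff]
  linear_combination -hy - hx

theorem two_mul_sum_narayanaForm_eq (x η : R) (hη : η ^ 2 = 1) (n : ℕ) :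
    2 * x * (x + 1) * ∑ k ∈ range n, (2 * k + 3) * η ^ (k + 1) * narayanaForm k x (x + 1)
      = η ^ n * (delannoyForm (n + 1) x (x + 1) + η * delannoyForm n x (x + 1))
        - (2 * x + 1 + η) := by
  induction n with
  | zero =>
    rw [sum_range_zero, mul_zero, pow_zero, zero_add, delannoyForm_one, delannoyForm_zero]
    ring
  | succ n ih =>
    rw [sum_range_succ, mul_add, ih, delannoyForm_add_two]
    linear_combination (-η ^ n * delannoyForm (n + 1) x (x + 1)) * hη

theorem cast_choose_sub_one_of_prime {p : ℕ} [CharP R p] (hp : p.Prime) {k : ℕ} (hk : k < p) :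
    ((p - 1).choose k : R) = (-1) ^ k := by
  induction k with
  | zero => simp
  | succ k ih =>
    have hpascal : p.choose (k + 1) = (p - 1).choose k + (p - 1).choose (k + 1) := by
      rw [← Nat.choose_succ_succ', Nat.sub_add_cancel hp.one_le]
    have hzero : (p.choose (k + 1) : R) = 0 :=
      (CharP.cast_eq_zero_iff R p _).mpr (hp.dvd_choose_self k.succ_ne_zero hk)
    rw [hpascal, Nat.cast_add, ih (by omega)] at hzero
    linear_combination hzero

theorem delannoyForm_of_prime {p : ℕ} [CharP R p] (hp : p.Prime) (x y : R) :
    delannoyForm p x y = x ^ p + y ^ p := by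
  rw [delannoyForm, sum_eq_add_of_mem (p, 0) (0, p) (by simp) (by simp) (by simp [hp.ne_zero])]
  · simp
  · rintro ⟨i, j⟩ hij ⟨hp0, h0p⟩
    have hij : i + j = p := mem_antidiagonal.mp hij
    have hi : i ≠ 0 ∧ i < p := by
      refine ⟨?_, lt_of_le_of_ne (by omega) ?_⟩ <;> rintro rfl <;> simp_all
    have hzero : (p.choose i : R) = 0 :=
      (CharP.cast_eq_zero_iff R p _).mpr (hp.dvd_choose_self hi.1 hi.2)
    simp [hzero]

theorem delannoyForm_sub_one_mul_sub_of_prime {p : ℕ} [CharP R p] (hp : p.Prime) (x y : R) :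
    delannoyForm (p - 1) x y * (y - x) = y ^ p - x ^ p := by
  have hone : ∀ ij ∈ antidiagonal (p - 1), ((p - 1).choose ij.1 : R) ^ 2 * x ^ ij.1 * y ^ ij.2
      = x ^ ij.1 * y ^ ij.2 := fun ij hij => by
    rw [cast_choose_sub_one_of_prime hp
        (by have := mem_antidiagonal.mp hij; have := hp.one_le; omega),
      ← pow_mul, pow_mul', neg_one_sq, one_pow, one_mul]
  rw [delannoyForm, sum_congr rfl hone, sum_antidiagonal_pow_mul_pow_mul_sub,
    Nat.sub_add_cancel hp.one_le]

end Forms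

theorem two_mul_sum_narayanaForm_zmod_eq_zero {p : ℕ} [Fact p.Prime] (hodd : Odd p)
    (x η : ZMod p) (hη : η ^ 2 = 1) :
    2 * x * (x + 1) * ∑ k ∈ range (p - 1), (2 * k + 3) * η ^ (k + 1) * narayanaForm k x (x + 1)
      = 0 := by
  have hp : p.Prime := Fact.out
  have hDp : delannoyForm p x (x + 1) = 2 * x + 1 := by
    rw [delannoyForm_of_prime hp, ZMod.pow_card, ZMod.pow_card]
    ring
  have hDpred : delannoyForm (p - 1) x (x + 1) = 1 := by
    simpa [ZMod.pow_card] using delannoyForm_sub_one_mul_sub_of_prime hp x (x + 1)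
  have hηp : η ^ (p - 1) = 1 := by
    obtain ⟨t, ht⟩ := Nat.Odd.sub_odd hodd odd_one
    rw [ht, ← two_mul, pow_mul, hη, one_pow]
  rw [two_mul_sum_narayanaForm_eq x η hη, Nat.sub_add_cancel hp.one_le, hDp, hDpred, hηp]
  ring

theorem schroederLittle_succ (n : ℕ) (x : ℚ) :
    schroederLittle (n + 1) x = narayanaForm n x (x + 1) := by
  rw [schroederLittle, narayanaForm,
    Nat.sum_antidiagonal_eq_sum_range_succ (fun i j => (narayanaCoeff i j : ℚ) * x ^ i * (x + 1) ^ j),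
    ← Finset.Ico_add_one_right_eq_Icc, Finset.sum_Ico_eq_sum_range]
  refine sum_congr (by simp) fun k hk => ?_
  obtain ⟨j, rfl⟩ := Nat.exists_eq_add_of_le (Nat.lt_succ_iff.mp (mem_range.mp hk))
  have h := congrArg (Int.cast : ℤ → ℚ) (narayanaCoeff_mul k j)
  push_cast at h
  simp only [show 1 + k = k + 1 by ring, Nat.add_sub_cancel, Nat.add_sub_cancel_left,
    show k + j + 1 - (k + 1) = j by omega]
  push_cast
  field_simp
  linear_combination -x ^ k * (x + 1) ^ j * h

theorem sum_schroederLittle_eq (ε x : ℚ) (n : ℕ) :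
    ∑ k ∈ range (n + 1), (2 * (k : ℚ) + 1) * ε ^ k * schroederLittle k x
      = ∑ k ∈ range n, (2 * k + 3) * ε ^ (k + 1) * narayanaForm k x (x + 1) := by
  rw [sum_range_succ', show schroederLittle 0 x = 0 by simp [schroederLittle], mul_zero, add_zero]
  exact sum_congr rfl fun k _ => by rw [schroederLittle_succ]; push_cast; ring

theorem sum_linear_weight_little_congr (p : ℕ) (hp : p.Prime) (hodd : Odd p)
    (ε : ℚ) (hε : ε = 1 ∨ ε = -1) (z : ℤ) (hz : Int.gcd (p : ℤ) (z * (z + 1)) = 1) :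
    ∃ m : ℤ, (∑ k ∈ Finset.range p, (2 * (k : ℚ) + 1) * ε ^ k * schroederLittle k (z : ℚ))
      = (p : ℚ) * m := by
  have := Fact.mk hp
  obtain ⟨η, rfl, hη⟩ : ∃ η : ℤ, (η : ℚ) = ε ∧ η ^ 2 = 1 := by
    rcases hε with rfl | rfl
    exacts [⟨1, by norm_num, by norm_num⟩, ⟨-1, by norm_num, by norm_num⟩]
  set S : ℤ := ∑ k ∈ range (p - 1), (2 * k + 3) * η ^ (k + 1) * narayanaForm k z (z + 1) with hS
  have hdvd : (p : ℤ) ∣ S * (2 * (z * (z + 1))) := by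
    rw [← ZMod.intCast_zmod_eq_zero_iff_dvd]
    push_cast [hS]
    linear_combination two_mul_sum_narayanaForm_zmod_eq_zero hodd (z : ZMod p) η
      (by rw [← Int.cast_pow, hη, Int.cast_one])
  have hcop : IsCoprime (p : ℤ) (2 * (z * (z + 1))) :=
    (Nat.isCoprime_iff_coprime.mpr (Nat.coprime_two_right.mpr hodd)).mul_right
      (Int.isCoprime_iff_gcd_eq_one.mpr hz)
  obtain ⟨m, hm⟩ := hcop.dvd_of_dvd_mul_right hdvd
  refine ⟨m, ?_⟩
  rw [← Nat.sub_add_cancel hp.one_le, sum_schroederLittle_eq, Nat.sub_add_cancel hp.one_le]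
  exact_mod_cast congrArg (Int.cast : ℤ → ℚ) hm
end

section
/- For any odd prime p, any nonnegative integer r, any ε ∈ {−1,1}, and any integer z with gcd(p, z(z+1)) = 1, Σ_{k=0}^{p-1} (2k+1)^{2r+1}·ε^k·S_k(z) ≡ 1 (mod p). -/
open Finset

/-!
Write `S_k(z) = ∑_j C(k+j, 2j) Cat_j z^j`, so that the sum becomes
`∑_j Cat_j z^j ∑_k w_k C(k+j, 2j)` with `w_k = (2k+1)^(2r+1) ε^k`. Since `(j+1) Cat_j C(k+j, 2j) = C(k, j) C(k+j, j)`, for `j + 1 < p`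
the inner sum vanishes modulo `p` as soon as `∑_k w_k C(k, j) C(k+j, j)` does, and the latter is
odd under `k ↦ p-1-k`: that substitution negates `w_k` and, by `C(k+j, j) ≡ (-1)^j C(p-1-k, j)`,
swaps the two binomial factors up to the same sign `(-1)^j`. Only `j = p-1` survives, and there only
`k = p-1`, contributing `w_{p-1} Cat_{p-1} z^{p-1} ≡ (-1)(-1)·1 = 1`: Lucas' theorem gives
`(p-1) Cat_{p-1} = C(2p-2, p) ≡ 1`, and Fermat `z^{p-1} ≡ 1`.
-/

open Nat

theorem succ_mul_catalan_mul_choose (k j : ℕ) :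
    (j + 1) * catalan j * (k + j).choose (2 * j) = k.choose j * (k + j).choose j := by
  rw [succ_mul_catalan_eq_centralBinom, centralBinom_eq_two_mul_choose]
  rcases le_or_gt j k with hjk | hkj
  · have h := Nat.choose_mul (n := k + j) (k := 2 * j) (s := j) (by omega)
    rw [show k + j - j = k by omega, show 2 * j - j = j by omega] at h
    rw [mul_comm, h, mul_comm]
  · rw [choose_eq_zero_of_lt (by omega : k + j < 2 * j), choose_eq_zero_of_lt hkj]
    simp

theorem choose_two_mul_succ_eq_mul_catalan (n : ℕ) :
    (2 * n).choose (n + 1) = n * catalan n := by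
  have h := choose_succ_right_eq (2 * n) n
  rw [show 2 * n - n = n by omega, ← centralBinom_eq_two_mul_choose,
    ← succ_mul_catalan_eq_centralBinom] at h
  exact Nat.eq_of_mul_eq_mul_right (by omega : 0 < n + 1) (by rw [h]; ring)

section SchroederCatalan

variable {R : Type*}

def schroederCatalan [CommSemiring R] (k : ℕ) (z : R) : R :=
  ∑ j ∈ range (k + 1), ((k + j).choose (2 * j) : R) * catalan j * z ^ j

@[simp, norm_cast]
theorem Int.cast_schroederCatalan [CommRing R] (k : ℕ) (z : ℤ) :
    ((schroederCatalan k z : ℤ) : R) = schroederCatalan k (z : R) := by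
  simp [schroederCatalan]

theorem schroederS_eq_schroederCatalan (k : ℕ) (z : ℚ) :
    schroederS k z = schroederCatalan k z := by
  refine sum_congr rfl fun j _ ↦ ?_
  have h := congrArg (Nat.cast : ℕ → ℚ) (succ_mul_catalan_mul_choose k j)
  push_cast at h
  rw [div_eq_iff (by positivity)]
  linear_combination -z ^ j * h

theorem schroederCatalan_eq_sum_range [CommSemiring R] {k n : ℕ} (hk : k < n) (z : R) :
    schroederCatalan k z = ∑ j ∈ range n, ((k + j).choose (2 * j) : R) * catalan j * z ^ j := by
  refine sum_subset (range_subset_range.mpr hk) fun j hjn hjk ↦ ?_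
  rw [mem_range] at hjn hjk
  rw [choose_eq_zero_of_lt (by omega : k + j < 2 * j), Nat.cast_zero, zero_mul, zero_mul]

end SchroederCatalan

theorem descPochhammer_eval_add_eq_neg_one_pow_mul {R : Type*} [CommRing R] (x : R) (j : ℕ) :
    (descPochhammer R j).eval (x + j) = (-1) ^ j * (descPochhammer R j).eval (-1 - x) := by
  rw [descPochhammer_eval_eq_ascPochhammer, ← ascPochhammer_eval_neg_eq_descPochhammer]
  ring_nf

theorem sum_range_eq_zero_of_reflect {R : Type*} [Ring R] [NoZeroDivisors R] (h2 : (2 : R) ≠ 0)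
    {n : ℕ} {f : ℕ → R} (hf : ∀ k < n, f (n - 1 - k) = -f k) :
    ∑ k ∈ range n, f k = 0 := by
  have h := sum_range_reflect f n
  rw [sum_congr rfl fun k hk ↦ hf k (mem_range.mp hk), sum_neg_distrib, neg_eq_iff_add_eq_zero,
    ← two_mul] at h
  exact (mul_eq_zero.mp h).resolve_left h2

namespace ZMod

theorem natCast_eq_neg_one_sub {p k m : ℕ} (hkm : k + m + 1 = p) : (m : ZMod p) = -1 - k := by
  have h := congrArg (Nat.cast : ℕ → ZMod p) hkm
  push_cast [ZMod.natCast_self] at h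
  linear_combination h

theorem natCast_catalan_sub_one {p : ℕ} [hp : Fact p.Prime] :
    (catalan (p - 1) : ZMod p) = -1 := by
  obtain ⟨n, rfl⟩ : ∃ n, p = n + 1 := ⟨p - 1, by have := hp.out.one_lt; omega⟩
  have hn : 1 ≤ n := by have := hp.out.one_lt; omega
  have hlucas : ((2 * n).choose (n + 1) : ZMod (n + 1)) = 1 := by
    have h := Choose.choose_modEq_choose_mod_mul_choose_div_nat (n := 2 * n) (k := n + 1)
      (p := n + 1)
    have hdiv : 2 * n / (n + 1) = 1 := Nat.div_eq_of_lt_le (by omega) (by omega)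
    rw [Nat.mod_self, Nat.div_self (succ_pos n), hdiv] at h
    simpa using (natCast_eq_natCast_iff _ _ _).mpr h
  rw [choose_two_mul_succ_eq_mul_catalan, Nat.cast_mul,
    natCast_eq_neg_one_sub (k := 0) (by omega), Nat.cast_zero, sub_zero] at hlucas
  rw [Nat.add_sub_cancel]
  linear_combination -hlucas

theorem natCast_choose_add {p : ℕ} [hp : Fact p.Prime] {k m j : ℕ} (hkm : k + m + 1 = p)
    (hj : j < p) : ((k + j).choose j : ZMod p) = (-1) ^ j * m.choose j := by
  have hfac : (j ! : ZMod p) ≠ 0 := by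
    rw [Ne, natCast_eq_zero_iff, hp.out.dvd_factorial]
    omega
  have hpoch (n : ℕ) :
      (j ! * n.choose j : ZMod p) = (descPochhammer (ZMod p) j).eval (n : ZMod p) := by
    rw [descPochhammer_eval_eq_descFactorial, descFactorial_eq_factorial_mul_choose, Nat.cast_mul]
  apply mul_left_cancel₀ hfac
  rw [mul_left_comm, hpoch, hpoch, natCast_eq_neg_one_sub hkm, Nat.cast_add,
    descPochhammer_eval_add_eq_neg_one_pow_mul]

end ZMod

section Reflection

variable {p : ℕ} [Fact p.Prime]

theorem sum_mul_choose_mul_choose_eq_zero (hp2 : p ≠ 2) {w : ℕ → ZMod p}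
    (hw : ∀ k m, k + m + 1 = p → w m = -w k) {j : ℕ} (hj : j < p) :
    ∑ k ∈ range p, w k * (k.choose j * (k + j).choose j) = 0 := by
  refine sum_range_eq_zero_of_reflect (Ring.two_ne_zero (by rwa [ZMod.ringChar_zmod_n]))
    fun k hk ↦ ?_
  have hkm : k + (p - 1 - k) + 1 = p := by omega
  have hmk : p - 1 - k + k + 1 = p := by omega
  rw [hw k _ hkm, ZMod.natCast_choose_add hmk hj, ZMod.natCast_choose_add hkm hj]
  ring

theorem sum_mul_choose_two_mul_mul_catalan_eq_zero (hp2 : p ≠ 2) {w : ℕ → ZMod p}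
    (hw : ∀ k m, k + m + 1 = p → w m = -w k) {j : ℕ} (hj : j + 1 < p) :
    ∑ k ∈ range p, w k * ((k + j).choose (2 * j) * catalan j) = 0 := by
  have hj1 : ((j + 1 : ℕ) : ZMod p) ≠ 0 := by
    rw [Ne, ZMod.natCast_eq_zero_iff]
    exact fun h ↦ absurd (Nat.le_of_dvd (succ_pos j) h) (by omega)
  apply mul_left_cancel₀ hj1
  rw [mul_zero, mul_sum, ← sum_mul_choose_mul_choose_eq_zero hp2 hw (by omega : j < p)]
  refine sum_congr rfl fun k _ ↦ ?_
  have h := congrArg (Nat.cast : ℕ → ZMod p) (succ_mul_catalan_mul_choose k j)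
  push_cast at h ⊢
  linear_combination w k * h

end Reflection

theorem odd_power_weight_reflect {p : ℕ} (hodd : Odd p) (r : ℕ) {e : ZMod p} (he : e ^ 2 = 1)
    {k m : ℕ} (hkm : k + m + 1 = p) :
    (2 * (m : ZMod p) + 1) ^ (2 * r + 1) * e ^ m
      = -((2 * (k : ZMod p) + 1) ^ (2 * r + 1) * e ^ k) := by
  have hpar : m % 2 = k % 2 := by obtain ⟨t, rfl⟩ := hodd; omega
  rw [ZMod.natCast_eq_neg_one_sub hkm, pow_eq_pow_mod m he, hpar, ← pow_eq_pow_mod k he,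
    show 2 * (-1 - (k : ZMod p)) + 1 = -(2 * k + 1) by ring, Odd.neg_pow ⟨r, rfl⟩, neg_mul]

theorem sum_odd_power_weight_schroederCatalan {p : ℕ} [Fact p.Prime] (hodd : Odd p) (r : ℕ)
    {e z : ZMod p} (he : e ^ 2 = 1) (hz : z ≠ 0) :
    ∑ k ∈ range p, (2 * (k : ZMod p) + 1) ^ (2 * r + 1) * e ^ k * schroederCatalan k z = 1 := by
  set w : ℕ → ZMod p := fun k ↦ (2 * (k : ZMod p) + 1) ^ (2 * r + 1) * e ^ k
  have hw : ∀ k m, k + m + 1 = p → w m = -w k := fun k m ↦ odd_power_weight_reflect hodd r he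
  have hp2 : p ≠ 2 := by rintro rfl; exact absurd hodd (by decide)
  obtain ⟨n, rfl⟩ : ∃ n, p = n + 1 := ⟨p - 1, by have := hodd.pos; omega⟩
  calc ∑ k ∈ range (n + 1), w k * schroederCatalan k z
      = ∑ j ∈ range (n + 1),
          (∑ k ∈ range (n + 1), w k * ((k + j).choose (2 * j) * catalan j)) * z ^ j := by
        rw [sum_congr rfl fun k hk ↦ by
          rw [schroederCatalan_eq_sum_range (mem_range.mp hk), mul_sum], sum_comm]
        refine sum_congr rfl fun j _ ↦ ?_
        rw [sum_mul]
        exact sum_congr rfl fun k _ ↦ by ring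
    _ = (∑ k ∈ range (n + 1), w k * ((k + n).choose (2 * n) * catalan n)) * z ^ n := by
        rw [sum_range_succ, sum_eq_zero fun j hj ↦ by
          rw [sum_mul_choose_two_mul_mul_catalan_eq_zero hp2 hw
            (by have := mem_range.mp hj; omega), zero_mul], zero_add]
    _ = w n * catalan n * z ^ n := by
        rw [sum_range_succ, sum_eq_zero fun k hk ↦ by
          rw [choose_eq_zero_of_lt (by have := mem_range.mp hk; omega), Nat.cast_zero, zero_mul,
            mul_zero], two_mul, choose_self, zero_add]
        ring
    _ = 1 := by
        have hcat := ZMod.natCast_catalan_sub_one (p := n + 1)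
        have hzn := ZMod.pow_card_sub_one_eq_one hz
        rw [Nat.add_sub_cancel] at hcat hzn
        rw [hw 0 n (by ring), hcat, hzn]
        simp [w]

theorem sum_odd_power_weight_S_congr (p : ℕ) (hp : p.Prime) (hodd : Odd p) (r : ℕ)
    (ε : ℚ) (hε : ε = 1 ∨ ε = -1) (z : ℤ) (hz : Int.gcd (p : ℤ) (z * (z + 1)) = 1) :
    ∃ m : ℤ,
      (∑ k ∈ Finset.range p, (2 * (k : ℚ) + 1) ^ (2 * r + 1) * ε ^ k * schroederS k (z : ℚ)) - 1
        = (p : ℚ) * m := by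
  have : Fact p.Prime := ⟨hp⟩
  obtain ⟨e, rfl, he⟩ : ∃ e : ℤ, ε = e ∧ e ^ 2 = 1 := by
    rcases hε with rfl | rfl
    exacts [⟨1, by simp, by simp⟩, ⟨-1, by simp, by simp⟩]
  have hz0 : (z : ZMod p) ≠ 0 := by
    rw [Ne, ZMod.intCast_zmod_eq_zero_iff_dvd]
    intro hpz
    have hp1 : (p : ℤ) ∣ (Int.gcd (p : ℤ) (z * (z + 1)) : ℤ) :=
      Int.dvd_coe_gcd dvd_rfl (hpz.mul_right (z + 1))
    rw [hz, Nat.cast_one] at hp1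
    exact hp.not_dvd_one (Int.natCast_dvd_natCast.mp hp1)
  set N : ℤ := ∑ k ∈ range p, (2 * (k : ℤ) + 1) ^ (2 * r + 1) * e ^ k * schroederCatalan k z
  have hN : (N : ZMod p) = 1 := by
    push_cast [N]
    refine sum_odd_power_weight_schroederCatalan hodd r ?_ hz0
    exact_mod_cast congrArg (Int.cast : ℤ → ZMod p) he
  obtain ⟨m, hm⟩ := (ZMod.intCast_eq_intCast_iff_dvd_sub 1 N p).mp (by rw [hN, Int.cast_one])
  refine ⟨m, ?_⟩
  simp only [schroederS_eq_schroederCatalan]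
  exact_mod_cast hm
end

section
/- For any odd prime p, any nonnegative integer r, and any ε ∈ {−1,1}, Σ_{k=0}^{p-1} (2k+1)^{2r+1}·ε^k·S_k ≡ 1 (mod p), where S_k is the k-th large Schröder number. -/
/-!
Writing `S_k = ∑_j C(k + j, 2j) Cat_j`, the sum becomes
`∑_j Cat_j ∑_{k < p} (2k + 1)^(2r + 1) ε^k C(k + j, 2j)`. Modulo `p` the reflection
`k ↦ p - 1 - k` negates `2k + 1` and fixes `ε^k` (Fermat) and, for `2j < p`, also
`C(k + j, 2j) = (k + j)(k + j - 1)⋯(k - j + 1) / (2j)!`; so those inner sums vanish.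
For `p ≤ 2j < 2p - 2` the prime `p` divides `Cat_j`, and for `j = p - 1` only `k = p - 1`
survives, contributing `Cat_{p-1} · (-1) ≡ 1` because `(2p - 1) Cat_{p-1} = C(2p - 1, p) ≡ 1`
by Lucas's theorem.
-/

open Finset

/-- Large Schröder number `S_n`. -/
noncomputable def schroederNum (n : ℕ) : ℚ :=
  ∑ k ∈ Finset.range (n + 1), (n.choose k : ℚ) * ((n + k).choose k : ℚ) / (k + 1)

theorem descPochhammer_eval_sub_one_sub {R : Type*} [CommRing R] (m : ℕ) (x : R) :
    (descPochhammer R m).eval ((m : R) - 1 - x) = (-1) ^ m * (descPochhammer R m).eval x := by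
  rw [descPochhammer_eval_eq_ascPochhammer, ← ascPochhammer_eval_neg_eq_descPochhammer]
  ring_nf

open Nat in
theorem Nat.cast_choose_eq_of_add_eq {K : Type*} [Field K] {m a b : ℕ} (hm : (m ! : K) ≠ 0)
    (heven : Even m) (hab : (a : K) + b = m - 1) : (a.choose m : K) = b.choose m := by
  have hpoch (n : ℕ) : (m ! : K) * n.choose m = (descPochhammer K m).eval (n : K) := by
    rw [descPochhammer_eval_eq_descFactorial, Nat.descFactorial_eq_factorial_mul_choose,
      Nat.cast_mul]
  apply mul_left_cancel₀ hm
  rw [hpoch, hpoch, show (a : K) = m - 1 - b by linear_combination hab,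
    descPochhammer_eval_sub_one_sub, heven.neg_one_pow, one_mul]

theorem sum_range_two_mul_add_one_pow_mul_eq_zero {R : Type*} [CommRing R] {n : ℕ}
    (hn : (n : R) = 0) (r : ℕ) {g : ℕ → R} (hg : ∀ k < n, g (n - 1 - k) = g k) :
    ∑ k ∈ range n, (2 * (k : R) + 1) ^ (2 * r + 1) * g k = 0 := by
  refine sum_involution (fun k _ ↦ n - 1 - k) (fun k hk ↦ ?_) (fun k hk hne hfix ↦ hne ?_)
    (fun k hk ↦ ?_) (fun k hk ↦ ?_) <;> rw [mem_range] at hk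
  · have hreflect : 2 * ((n - 1 - k : ℕ) : R) + 1 = -(2 * k + 1) := by
      rw [Nat.cast_sub (by omega), Nat.cast_pred (by omega)]
      linear_combination 2 * hn
    rw [hreflect, hg k hk, (odd_two_mul_add_one r).neg_pow]
    ring
  · have hk' : 2 * (k : R) + 1 = 0 := by
      rw [← hn, ← show 2 * k + 1 = n by omega]
      push_cast; ring
    rw [hk', zero_pow (by omega), zero_mul]
  · rw [mem_range]; omega
  · omega

theorem Nat.Prime.dvd_catalan {p j : ℕ} (hp : p.Prime) (hpj : p ≤ 2 * j) (hjp : j + 1 < p) :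
    p ∣ catalan j := by
  have hcentral : p ∣ (j + 1) * catalan j := by
    rw [succ_mul_catalan_eq_centralBinom, Nat.centralBinom, two_mul]
    exact hp.dvd_choose_add (by omega) (by omega) (by omega)
  exact (hp.dvd_mul.mp hcentral).resolve_left (Nat.not_dvd_of_pos_of_lt (by omega) hjp)

theorem two_mul_add_one_mul_catalan (n : ℕ) :
    (2 * n + 1) * catalan n = (2 * n + 1).choose (n + 1) := by
  apply Nat.eq_of_mul_eq_mul_left n.succ_pos
  calc (n + 1) * ((2 * n + 1) * catalan n) = (2 * n + 1) * ((n + 1) * catalan n) := by ring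
    _ = (2 * n + 1) * (2 * n).choose n := by
      rw [succ_mul_catalan_eq_centralBinom, Nat.centralBinom]
    _ = (n + 1) * (2 * n + 1).choose (n + 1) := by
      rw [Nat.add_one_mul_choose_eq, mul_comm]

theorem ZMod.natCast_catalan_pred {p : ℕ} [Fact p.Prime] : (catalan (p - 1) : ZMod p) = -1 := by
  have hp : p.Prime := Fact.out
  have hlucas : ((2 * (p - 1) + 1).choose (p - 1 + 1) : ZMod p) = 1 := by
    have := hp.two_le
    rw [show 2 * (p - 1) + 1 = p - 1 + p * 1 by omega, show p - 1 + 1 = 0 + p * 1 by omega,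
      (ZMod.natCast_eq_natCast_iff _ _ _).2 Choose.choose_modEq_choose_mod_mul_choose_div_nat]
    simp [Nat.mod_eq_of_lt, Nat.div_eq_of_lt, hp.pos]
  have h := congrArg (Nat.cast : ℕ → ZMod p) (two_mul_add_one_mul_catalan (p - 1))
  rw [hlucas] at h
  push_cast [Nat.cast_pred hp.pos, ZMod.natCast_self] at h
  linear_combination -h

def schroederNat (n : ℕ) : ℕ :=
  ∑ j ∈ range (n + 1), (n + j).choose (2 * j) * catalan j

theorem schroederNum_eq_schroederNat (n : ℕ) : schroederNum n = schroederNat n := by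
  rw [schroederNum, schroederNat, Nat.cast_sum]
  refine sum_congr rfl fun j _ ↦ ?_
  have hnat : n.choose j * (n + j).choose j = (n + j).choose (2 * j) * catalan j * (j + 1) := by
    have h := Nat.choose_mul (n := n + j) (k := 2 * j) (s := j) (by omega)
    rw [show n + j - j = n by omega, show 2 * j - j = j by omega] at h
    rw [mul_comm (n.choose j), ← h, ← Nat.centralBinom, ← succ_mul_catalan_eq_centralBinom]
    ring
  rw [div_eq_iff (by positivity)]
  exact_mod_cast hnat

theorem schroederNat_eq_sum_range {n N : ℕ} (hn : n < N) :
    schroederNat n = ∑ j ∈ range N, (n + j).choose (2 * j) * catalan j := by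
  refine sum_subset (range_subset_range.2 hn) fun j _ hj ↦ ?_
  rw [mem_range, not_lt] at hj
  rw [Nat.choose_eq_zero_of_lt (by omega), zero_mul]

theorem ZMod.pow_pred_sub_eq_pow {p : ℕ} [Fact p.Prime] {ε : ZMod p} (hε : ε ^ 2 = 1) {k : ℕ}
    (hk : k < p) : ε ^ (p - 1 - k) = ε ^ k := by
  have hε0 : ε ≠ 0 := by rintro rfl; simp at hε
  rw [pow_sub₀ _ hε0 (by omega), ZMod.pow_card_sub_one_eq_one hε0, one_mul]
  exact inv_eq_of_mul_eq_one_right (by rw [← pow_add, ← two_mul, pow_mul, hε, one_pow])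

theorem ZMod.sum_two_mul_add_one_pow_mul_pow_mul_choose_eq_zero {p : ℕ} [Fact p.Prime] (r : ℕ)
    {ε : ZMod p} (hε : ε ^ 2 = 1) {j : ℕ} (hj : 2 * j < p) :
    ∑ k ∈ range p,
      (2 * (k : ZMod p) + 1) ^ (2 * r + 1) * (ε ^ k * (k + j).choose (2 * j)) = 0 := by
  refine sum_range_two_mul_add_one_pow_mul_eq_zero (ZMod.natCast_self p) r fun k hk ↦ ?_
  rw [ZMod.pow_pred_sub_eq_pow hε hk]
  congr 1
  refine Nat.cast_choose_eq_of_add_eq ?_ (even_two_mul j) ?_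
  · rw [Ne, ZMod.natCast_eq_zero_iff, (Fact.out : p.Prime).dvd_factorial, not_le]
    exact hj
  · push_cast [Nat.cast_sub (by omega : k ≤ p - 1), Nat.cast_pred (by omega : 0 < p),
      ZMod.natCast_self]
    ring

theorem ZMod.sum_two_mul_add_one_pow_mul_pow_mul_schroederNat {p : ℕ} [Fact p.Prime] (r : ℕ)
    {ε : ZMod p} (hε : ε ^ 2 = 1) :
    ∑ k ∈ range p, (2 * (k : ZMod p) + 1) ^ (2 * r + 1) * ε ^ k * schroederNat k = 1 := by
  have hp : p.Prime := Fact.out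
  set T : ℕ → ZMod p := fun k ↦ (2 * (k : ZMod p) + 1) ^ (2 * r + 1)
  have hlow : ∀ j < p - 1,
      (catalan j : ZMod p) * ∑ k ∈ range p, T k * (ε ^ k * (k + j).choose (2 * j)) = 0 := by
    intro j hj
    rcases lt_or_ge (2 * j) p with h2j | h2j
    · rw [ZMod.sum_two_mul_add_one_pow_mul_pow_mul_choose_eq_zero r hε h2j, mul_zero]
    · rw [(ZMod.natCast_eq_zero_iff _ _).2 (hp.dvd_catalan h2j (by omega)), zero_mul]
  have htop : ∑ k ∈ range p, T k * (ε ^ k * (k + (p - 1)).choose (2 * (p - 1))) = -1 := by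
    rw [sum_eq_single (p - 1) (fun k hk hne ↦ ?_)
      (fun h ↦ absurd (mem_range.2 (Nat.sub_lt hp.pos one_pos)) h)]
    · rw [← two_mul, Nat.choose_self, ZMod.pow_card_sub_one_eq_one (by rintro rfl; simp at hε)]
      simp only [T]
      push_cast [Nat.cast_pred hp.pos, ZMod.natCast_self]
      rw [show 2 * (0 - 1 : ZMod p) + 1 = -1 by ring, (odd_two_mul_add_one r).neg_one_pow]
      simp
    · rw [mem_range] at hk
      rw [Nat.choose_eq_zero_of_lt (by omega), Nat.cast_zero, mul_zero, mul_zero]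
  calc ∑ k ∈ range p, T k * ε ^ k * schroederNat k
      = ∑ k ∈ range p, ∑ j ∈ range p,
          (catalan j : ZMod p) * (T k * (ε ^ k * (k + j).choose (2 * j))) := by
        refine sum_congr rfl fun k hk ↦ ?_
        rw [schroederNat_eq_sum_range (mem_range.1 hk), Nat.cast_sum, mul_sum]
        refine sum_congr rfl fun j _ ↦ ?_
        push_cast; ring
    _ = ∑ j ∈ range (p - 1 + 1), (catalan j : ZMod p) *
          ∑ k ∈ range p, T k * (ε ^ k * (k + j).choose (2 * j)) := by
        rw [Nat.sub_add_cancel hp.one_le, sum_comm]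
        simp only [mul_sum]
    _ = 1 := by
        rw [sum_range_succ, sum_eq_zero fun j hj ↦ hlow j (mem_range.1 hj), htop,
          ZMod.natCast_catalan_pred]
        ring

theorem sum_odd_power_weight_schroederNum_congr_general (p : ℕ) (hp : p.Prime)
    (r : ℕ) (ε : ℚ) (hε : ε = 1 ∨ ε = -1) :
    ∃ m : ℤ,
      (∑ k ∈ Finset.range p, (2 * (k : ℚ) + 1) ^ (2 * r + 1) * ε ^ k * schroederNum k) - 1
        = (p : ℚ) * m := by
  have := Fact.mk hp
  obtain ⟨e, rfl, he⟩ : ∃ e : ℤ, ε = e ∧ e ^ 2 = 1 := by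
    rcases hε with rfl | rfl
    exacts [⟨1, by simp, by norm_num⟩, ⟨-1, by simp, by norm_num⟩]
  set A : ℤ := ∑ k ∈ range p, (2 * (k : ℤ) + 1) ^ (2 * r + 1) * e ^ k * schroederNat k
  have hAQ :
      ∑ k ∈ range p, (2 * (k : ℚ) + 1) ^ (2 * r + 1) * (e : ℚ) ^ k * schroederNum k = A := by
    simp only [A, schroederNum_eq_schroederNat]
    push_cast; rfl
  have hAp : ((1 : ℤ) : ZMod p) = A := by
    have he' : (e : ZMod p) ^ 2 = 1 := by exact_mod_cast congrArg (Int.cast : ℤ → ZMod p) he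
    simp only [A]
    push_cast
    exact (ZMod.sum_two_mul_add_one_pow_mul_pow_mul_schroederNat r he').symm
  obtain ⟨m, hm⟩ := (ZMod.intCast_eq_intCast_iff_dvd_sub 1 A p).1 hAp
  exact ⟨m, by rw [hAQ]; exact_mod_cast hm⟩

theorem sum_odd_power_weight_schroederNum_congr (p : ℕ) (hp : p.Prime) (hodd : Odd p)
    (r : ℕ) (ε : ℚ) (hε : ε = 1 ∨ ε = -1) :
    ∃ m : ℤ,
      (∑ k ∈ Finset.range p, (2 * (k : ℚ) + 1) ^ (2 * r + 1) * ε ^ k * schroederNum k) - 1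
        = (p : ℚ) * m :=
  sum_odd_power_weight_schroederNum_congr_general p hp r ε hε
end

section
/- For every positive integer n, S_n = 2·s_n, where S_n and s_n are the large and little Schröder numbers. -/
open Finset

/-- Little Schröder number `s_n`. -/
noncomputable def littleSchroederNum (n : ℕ) : ℚ :=
  ∑ k ∈ Finset.Icc 1 n,
    (1 / (n : ℚ)) * (n.choose k : ℚ) * (n.choose (k - 1) : ℚ) * 2 ^ (n - k)

/-! With `d k = C(n,k) C(n+k,k)`, the ratio `d (k+1) / d k = (n-k)(n+k+1)/(k+1)^2` gives
`n(n+1) d k / (k+1) = (k+1) d (k+1) + k d k`, which telescopes to `n(n+1) S_n = 2 ∑ k d k`.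
On the other side `k C(n+k,k) = (n+1) C(n+k,n+1)`; expanding `C(n+k,n+1)` by Vandermonde and
using `∑ₖ C(n,k) C(k,a) = C(n,a) 2^(n-a)` turns `∑ k d k` into
`(n+1) ∑ C(n,k) C(n,k-1) 2^(n-k) = (n+1) n s_n`. -/

namespace Nat

theorem sum_range_choose_mul_choose (n a : ℕ) :
    ∑ k ∈ range (n + 1), n.choose k * k.choose a = n.choose a * 2 ^ (n - a) := by
  rcases lt_or_ge n a with hna | han
  · rw [choose_eq_zero_of_lt hna, zero_mul]
    refine sum_eq_zero fun k hk => ?_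
    rw [mem_range] at hk
    rw [choose_eq_zero_of_lt (show k < a by omega), mul_zero]
  obtain ⟨d, rfl⟩ := Nat.exists_eq_add_of_le han
  rw [add_assoc, sum_range_add, sum_eq_zero fun k hk =>
    by rw [choose_eq_zero_of_lt (mem_range.1 hk), mul_zero], zero_add, add_tsub_cancel_left,
    ← sum_range_choose, mul_sum]
  refine sum_congr rfl fun i _ => ?_
  rw [choose_mul (le_add_right a i), add_tsub_cancel_left, add_tsub_cancel_left]

theorem sum_range_choose_mul_add_choose (n m j : ℕ) :
    ∑ k ∈ range (n + 1), n.choose k * (k + m).choose j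
      = ∑ p ∈ antidiagonal j, n.choose p.1 * m.choose p.2 * 2 ^ (n - p.1) := by
  simp only [add_choose_eq, mul_sum]
  rw [sum_comm]
  refine sum_congr rfl fun p _ => ?_
  rw [mul_right_comm, ← sum_range_choose_mul_choose, sum_mul]
  exact sum_congr rfl fun k _ => by ring

theorem sum_antidiagonal_succ_choose_mul_choose_mul_two_pow (n : ℕ) :
    ∑ p ∈ antidiagonal (n + 1), n.choose p.1 * n.choose p.2 * 2 ^ (n - p.1)
      = ∑ k ∈ Icc 1 n, n.choose k * n.choose (k - 1) * 2 ^ (n - k) := by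
  rw [Finset.Nat.sum_antidiagonal_eq_sum_range_succ_mk, sum_range_succ, sum_range_succ',
    ← Ico_add_one_right_eq_Icc, sum_Ico_eq_sum_range, add_tsub_cancel_right]
  simp only [Nat.sub_zero, choose_succ_self, mul_zero, zero_mul, add_zero]
  refine sum_congr rfl fun k hk => ?_
  rw [mem_range] at hk
  rw [add_comm 1 k, add_tsub_cancel_right, Nat.add_sub_add_right, choose_symm (by omega)]

theorem mul_add_choose_self_eq (n k : ℕ) :
    k * (n + k).choose k = (n + 1) * (n + k).choose (n + 1) := by
  rw [mul_comm, ← choose_symm_add, mul_comm (n + 1), choose_succ_right_eq, add_tsub_cancel_left]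

end Nat

def delannoyTerm (n k : ℕ) : ℕ := n.choose k * (n + k).choose k

theorem sq_succ_mul_delannoyTerm_succ (n k : ℕ) :
    (k + 1) ^ 2 * delannoyTerm n (k + 1) = (n - k) * (n + k + 1) * delannoyTerm n k := by
  have h₁ := Nat.choose_succ_right_eq n k
  have h₂ := Nat.add_one_mul_choose_eq (n + k) k
  rw [delannoyTerm, delannoyTerm, ← add_assoc]
  calc (k + 1) ^ 2 * (n.choose (k + 1) * (n + k + 1).choose (k + 1))
      = (n.choose (k + 1) * (k + 1)) * ((n + k + 1).choose (k + 1) * (k + 1)) := by ring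
    _ = _ := by rw [h₁, ← h₂]; ring

theorem delannoyTerm_succ_self (n : ℕ) : delannoyTerm n (n + 1) = 0 := by
  rw [delannoyTerm, Nat.choose_succ_self, zero_mul]

theorem mul_succ_mul_delannoyTerm_div_succ {n k : ℕ} (hk : k ≤ n) :
    (n * (n + 1) * delannoyTerm n k / (k + 1) : ℚ)
      = (k + 1) * delannoyTerm n (k + 1) + k * delannoyTerm n k := by
  have h := congrArg (Nat.cast : ℕ → ℚ) (sq_succ_mul_delannoyTerm_succ n k)
  push_cast [Nat.cast_sub hk] at h
  rw [div_eq_iff (by positivity)]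
  linear_combination -h

theorem mul_succ_mul_schroederNum (n : ℕ) :
    n * (n + 1) * schroederNum n
      = 2 * ((∑ k ∈ range (n + 1), k * delannoyTerm n k : ℕ) : ℚ) := by
  have h₁ := sum_range_succ' (fun k => (k * delannoyTerm n k : ℚ)) (n + 1)
  have h₂ := sum_range_succ (fun k => (k * delannoyTerm n k : ℚ)) (n + 1)
  simp only [delannoyTerm_succ_self, Nat.cast_zero, mul_zero, add_zero, Nat.cast_add,
    Nat.cast_one] at h₁ h₂
  calc n * (n + 1) * schroederNum n
      = ∑ k ∈ range (n + 1), (n * (n + 1) * delannoyTerm n k / (k + 1) : ℚ) := by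
        simp only [schroederNum, delannoyTerm, mul_sum, Nat.cast_mul, mul_div_assoc]
    _ = ∑ k ∈ range (n + 1), ((k + 1) * delannoyTerm n (k + 1) + k * delannoyTerm n k : ℚ) :=
        sum_congr rfl fun k hk =>
          mul_succ_mul_delannoyTerm_div_succ (Nat.lt_succ_iff.1 (mem_range.1 hk))
    _ = _ := by
        push_cast
        rw [sum_add_distrib]
        linarith

theorem sum_range_mul_delannoyTerm (n : ℕ) :
    ∑ k ∈ range (n + 1), k * delannoyTerm n k
      = (n + 1) * ∑ k ∈ Icc 1 n, n.choose k * n.choose (k - 1) * 2 ^ (n - k) := by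
  calc ∑ k ∈ range (n + 1), k * delannoyTerm n k
      = ∑ k ∈ range (n + 1), (n + 1) * (n.choose k * (k + n).choose (n + 1)) :=
        sum_congr rfl fun k _ => by
          rw [delannoyTerm, mul_left_comm, Nat.mul_add_choose_self_eq, add_comm k n]; ring
    _ = _ := by
        rw [← mul_sum, Nat.sum_range_choose_mul_add_choose,
          Nat.sum_antidiagonal_succ_choose_mul_choose_mul_two_pow]

theorem mul_littleSchroederNum {n : ℕ} (hn : n ≠ 0) :
    n * littleSchroederNum n
      = ((∑ k ∈ Icc 1 n, n.choose k * n.choose (k - 1) * 2 ^ (n - k) : ℕ) : ℚ) := by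
  rw [littleSchroederNum, mul_sum, Nat.cast_sum]
  refine sum_congr rfl fun k _ => ?_
  push_cast
  field_simp

theorem schroederNum_eq_two_mul_little (n : ℕ) (hn : 1 ≤ n) :
    schroederNum n = 2 * littleSchroederNum n := by
  have hn₀ : n ≠ 0 := by omega
  have h := mul_succ_mul_schroederNum n
  rw [sum_range_mul_delannoyTerm, Nat.cast_mul, ← mul_littleSchroederNum hn₀] at h
  refine mul_left_cancel₀ (mul_ne_zero (Nat.cast_ne_zero.2 hn₀) (n.cast_add_one_ne_zero)) ?_
  push_cast at h
  linear_combination h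
end

section
/- Let γ ∈ ℚ, J a positive integer, and x(k) ∈ ℚ[k]. Then x(γ+k) = (−1)^{deg x}·x(γ−k−J) (as polynomials in k) if and only if x is a constant multiple of a finite product of factors of the form (k−γ+J/2) and (k−γ+J/2)² − q with q algebraic over ℚ (i.e., q ∈ an algebraic closure of ℚ). -/
/-!
Put `β = γ - J/2` and `y(k) = x(β + k)`. The symmetry of `x` says exactly that
`y(-k) = (-1)^{deg y} y(k)`, a property that survives extending scalars to `ℚ̄`. There the roots of
such a `y` are stable under `r ↦ -r`, so `y` is divisible by `k` (if `0` is a root) or by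
`k² - r²` with `r ≠ -r`; the quotient has the same property and smaller degree. Conversely every
product of a constant, `k`'s and `k² - q`'s has the property. Shifting back by `β` turns `k` into
`k - β` and gives the factors of the statement.
-/

open Polynomial

namespace Polynomial

variable {R : Type*} [CommRing R]

def HasDegreeParity (p : R[X]) : Prop :=
  p.comp (-X) = (-1) ^ p.natDegree * p

def IsCenteredFactor (a : R) (f : R[X]) : Prop :=
  f = X - C a ∨ ∃ q, f = (X - C a) ^ 2 - C q

def HasCenteredFactorization (a : R) (p : R[X]) : Prop :=
  ∃ (c : R) (l : Multiset R[X]), (∀ f ∈ l, IsCenteredFactor a f) ∧ p = C c * l.prod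

theorem hasDegreeParity_iff_eq_mul_comp_neg_X {p : R[X]} :
    p.HasDegreeParity ↔ p = (-1) ^ p.natDegree * p.comp (-X) := by
  have hsq : ((-1 : R[X]) ^ p.natDegree) * (-1) ^ p.natDegree = 1 := by
    rw [← mul_pow, neg_one_mul, neg_neg, one_pow]
  unfold HasDegreeParity
  generalize (-1 : R[X]) ^ p.natDegree = u at hsq ⊢
  constructor
  · intro h
    rw [h, ← mul_assoc, hsq, one_mul]
  · intro h
    conv_rhs => rw [h, ← mul_assoc, hsq, one_mul]

theorem hasDegreeParity_C (c : R) : (C c).HasDegreeParity := by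
  simp [HasDegreeParity]

theorem hasDegreeParity_map_iff {S : Type*} [CommRing S] {f : R →+* S}
    (hf : Function.Injective f) {p : R[X]} :
    (p.map f).HasDegreeParity ↔ p.HasDegreeParity := by
  have hmap : (p.map f).HasDegreeParity ↔
      (p.comp (-X)).map f = ((-1) ^ p.natDegree * p).map f := by
    simp [HasDegreeParity, map_comp, natDegree_map_eq_of_injective hf]
  rw [hmap, (map_injective f hf).eq_iff, HasDegreeParity]

theorem HasDegreeParity.isRoot_neg {p : R[X]} (hp : p.HasDegreeParity) {r : R}
    (hr : p.IsRoot r) : p.IsRoot (-r) := by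
  have h := congrArg (eval r) hp
  simp only [eval_comp, eval_neg, eval_X, eval_mul, hr.eq_zero, mul_zero] at h
  exact h

theorem comp_C_add_X_eq_iff_hasDegreeParity_taylor (x : R[X]) (c d : R) :
    x.comp (C (c + d) + X) = (-1) ^ x.natDegree * x.comp (C (c + d) - X - C (2 * d)) ↔
      (taylor c x).HasDegreeParity := by
  have hleft : x.comp (C (c + d) + X) = taylor d (taylor c x) := by
    rw [taylor_taylor, taylor_apply, add_comm d, add_comm X]
  have hright : x.comp (C (c + d) - X - C (2 * d)) = taylor d ((taylor c x).comp (-X)) := by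
    simp only [taylor_apply, comp_assoc, add_comp, neg_comp, X_comp, C_comp, map_add, map_mul]
    congr 1
    simp only [C_ofNat]
    ring
  rw [hasDegreeParity_iff_eq_mul_comp_neg_X, natDegree_taylor, hleft, hright]
  conv_rhs => rw [← taylor_inj (r := d), taylor_mul, taylor_pow, map_neg, taylor_one, C_1]

theorem IsCenteredFactor.taylor {a : R} {f : R[X]} (h : IsCenteredFactor a f) (r : R) :
    IsCenteredFactor (a - r) (taylor r f) := by
  have hX : Polynomial.taylor r (X - C a) = X - C (a - r) := by
    rw [map_sub, taylor_X, taylor_C, C_sub]; ring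
  rcases h with rfl | ⟨q, rfl⟩
  · exact Or.inl hX
  · exact Or.inr ⟨q, by rw [map_sub, taylor_pow, hX, taylor_C]⟩

theorem HasCenteredFactorization.taylor {a : R} {p : R[X]} (h : HasCenteredFactorization a p)
    (r : R) : HasCenteredFactorization (a - r) (taylor r p) := by
  obtain ⟨c, l, hl, rfl⟩ := h
  refine ⟨c, l.map (Polynomial.taylor r), ?_, ?_⟩
  · simp only [Multiset.mem_map, forall_exists_index, and_imp, forall_apply_eq_imp_iff₂]
    exact fun f hf => (hl f hf).taylor r
  · rw [taylor_mul, taylor_C]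
    exact congrArg _ (map_multiset_prod (taylorAlgHom r) l)

theorem hasCenteredFactorization_zero_taylor_iff {a : R} {p : R[X]} :
    HasCenteredFactorization 0 (taylor a p) ↔ HasCenteredFactorization a p := by
  refine ⟨fun h => ?_, fun h => by simpa using h.taylor a⟩
  simpa [taylor_taylor] using h.taylor (-a)

theorem IsCenteredFactor.natDegree_pos [Nontrivial R] {a : R} {f : R[X]}
    (h : IsCenteredFactor a f) : 0 < f.natDegree := by
  rcases h with rfl | ⟨q, rfl⟩
  · simp
  · rw [natDegree_sub_C, (monic_X_sub_C a).natDegree_pow, natDegree_X_sub_C]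
    norm_num

theorem IsCenteredFactor.hasDegreeParity [Nontrivial R] {f : R[X]} (h : IsCenteredFactor 0 f) :
    f.HasDegreeParity := by
  rcases h with rfl | ⟨q, rfl⟩
  · simp [HasDegreeParity]
  · simp [HasDegreeParity, sub_comp]

theorem HasDegreeParity.mul [NoZeroDivisors R] {p q : R[X]} (hp : p.HasDegreeParity)
    (hq : q.HasDegreeParity) : (p * q).HasDegreeParity := by
  rcases eq_or_ne p 0 with rfl | hp0
  · simpa using hasDegreeParity_C (0 : R)
  rcases eq_or_ne q 0 with rfl | hq0
  · simpa using hasDegreeParity_C (0 : R)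
  unfold HasDegreeParity at *
  rw [mul_comp, hp, hq, natDegree_mul hp0 hq0, pow_add]
  ring

theorem HasDegreeParity.multiset_prod [NoZeroDivisors R] {l : Multiset R[X]}
    (hl : ∀ f ∈ l, f.HasDegreeParity) : l.prod.HasDegreeParity := by
  induction l using Multiset.induction with
  | empty => simpa using hasDegreeParity_C (1 : R)
  | cons f l ih =>
    rw [Multiset.prod_cons]
    exact (hl f (Multiset.mem_cons_self f l)).mul
      (ih fun g hg => hl g (Multiset.mem_cons_of_mem hg))

theorem HasDegreeParity.of_mul_left [IsDomain R] {p q : R[X]} (hpq : (p * q).HasDegreeParity)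
    (hp : p.HasDegreeParity) (hp0 : p ≠ 0) : q.HasDegreeParity := by
  rcases eq_or_ne q 0 with rfl | hq0
  · simpa using hasDegreeParity_C (0 : R)
  unfold HasDegreeParity at *
  rw [mul_comp, hp, natDegree_mul hp0 hq0, pow_add] at hpq
  have hu : (-1 : R[X]) ^ p.natDegree * p ≠ 0 := mul_ne_zero (pow_ne_zero _ (by simp)) hp0
  apply mul_left_cancel₀ hu
  linear_combination hpq

theorem HasCenteredFactorization.hasDegreeParity [IsDomain R] {p : R[X]}
    (h : HasCenteredFactorization 0 p) : p.HasDegreeParity := by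
  obtain ⟨c, l, hl, rfl⟩ := h
  exact (hasDegreeParity_C c).mul
    (HasDegreeParity.multiset_prod fun f hf => (hl f hf).hasDegreeParity)

section IsAlgClosed

variable {K : Type*} [Field K] [IsAlgClosed K] [NeZero (2 : K)]

theorem HasDegreeParity.exists_isCenteredFactor_dvd {p : K[X]} (hp : p.HasDegreeParity)
    (hdeg : 0 < p.natDegree) : ∃ g, IsCenteredFactor 0 g ∧ g ∣ p := by
  obtain ⟨r, hr⟩ := IsAlgClosed.exists_root p (natDegree_pos_iff_degree_pos.mp hdeg).ne'
  rcases eq_or_ne r 0 with rfl | hr0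
  · exact ⟨X - C 0, Or.inl rfl, dvd_iff_isRoot.mpr hr⟩
  have hcop : IsCoprime (X - C r) (X - C (-r)) :=
    isCoprime_X_sub_C_of_isUnit_sub (Ne.isUnit (by
      rw [sub_neg_eq_add, ← two_mul]; exact mul_ne_zero two_ne_zero hr0))
  refine ⟨(X - C 0) ^ 2 - C (r ^ 2), Or.inr ⟨r ^ 2, rfl⟩, ?_⟩
  have hfac : (X - C 0) ^ 2 - C (r ^ 2) = (X - C r) * (X - C (-r)) := by
    simp only [map_zero, map_neg, map_pow]; ring
  rw [hfac]
  exact hcop.mul_dvd (dvd_iff_isRoot.mpr hr) (dvd_iff_isRoot.mpr (hp.isRoot_neg hr))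

theorem HasDegreeParity.hasCenteredFactorization {p : K[X]} (hp : p.HasDegreeParity) :
    HasCenteredFactorization 0 p := by
  induction hn : p.natDegree using Nat.strong_induction_on generalizing p with
  | _ n ih =>
  rcases Nat.eq_zero_or_pos n with h0 | hpos
  · exact ⟨p.coeff 0, 0, by simp, by simpa using eq_C_of_natDegree_eq_zero (hn.trans h0)⟩
  obtain ⟨g, hg, t, rfl⟩ := hp.exists_isCenteredFactor_dvd (hn ▸ hpos)
  have hg0 : g ≠ 0 := ne_zero_of_natDegree_gt hg.natDegree_pos
  have ht0 : t ≠ 0 := by rintro rfl; simp at hn; omega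
  have hdeg : t.natDegree < n := by
    rw [← hn, natDegree_mul hg0 ht0]; linarith [hg.natDegree_pos]
  obtain ⟨c, l, hl, rfl⟩ := ih _ hdeg (hp.of_mul_left hg.hasDegreeParity hg0) rfl
  refine ⟨c, g ::ₘ l, ?_, by rw [Multiset.prod_cons]; ring⟩
  simpa [Multiset.forall_mem_cons] using ⟨hg, hl⟩

theorem hasDegreeParity_iff_hasCenteredFactorization {p : K[X]} :
    p.HasDegreeParity ↔ HasCenteredFactorization 0 p :=
  ⟨HasDegreeParity.hasCenteredFactorization, HasCenteredFactorization.hasDegreeParity⟩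

end IsAlgClosed

end Polynomial

theorem symmetry_iff_factorization_general (γ : ℚ) (J : ℕ) (x : Polynomial ℚ) :
    (x.comp (Polynomial.C γ + Polynomial.X) =
        (-1 : Polynomial ℚ) ^ x.natDegree *
          x.comp (Polynomial.C γ - Polynomial.X - Polynomial.C (J : ℚ))) ↔
      ∃ (c : AlgebraicClosure ℚ) (l : Multiset (Polynomial (AlgebraicClosure ℚ))),
        (∀ f ∈ l,
          f = Polynomial.X - Polynomial.C (algebraMap ℚ (AlgebraicClosure ℚ) (γ - J / 2)) ∨
          ∃ q : AlgebraicClosure ℚ,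
            f = (Polynomial.X - Polynomial.C (algebraMap ℚ (AlgebraicClosure ℚ) (γ - J / 2))) ^ 2
                  - Polynomial.C q) ∧
        x.map (algebraMap ℚ (AlgebraicClosure ℚ)) = Polynomial.C c * l.prod := by
  have hshift := comp_C_add_X_eq_iff_hasDegreeParity_taylor x (γ - J / 2) (J / 2)
  rw [sub_add_cancel, mul_div_cancel₀ _ two_ne_zero] at hshift
  rw [hshift, ← hasDegreeParity_map_iff (algebraMap ℚ (AlgebraicClosure ℚ)).injective,
    map_taylor, hasDegreeParity_iff_hasCenteredFactorization,
    hasCenteredFactorization_zero_taylor_iff]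
  rfl

theorem symmetry_iff_factorization (γ : ℚ) (J : ℕ) (hJ : 0 < J) (x : Polynomial ℚ) :
    (x.comp (Polynomial.C γ + Polynomial.X) =
        (-1 : Polynomial ℚ) ^ x.natDegree *
          x.comp (Polynomial.C γ - Polynomial.X - Polynomial.C (J : ℚ))) ↔
      ∃ (c : AlgebraicClosure ℚ) (l : Multiset (Polynomial (AlgebraicClosure ℚ))),
        (∀ f ∈ l,
          f = Polynomial.X - Polynomial.C (algebraMap ℚ (AlgebraicClosure ℚ) (γ - J / 2)) ∨
          ∃ q : AlgebraicClosure ℚ,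
            f = (Polynomial.X - Polynomial.C (algebraMap ℚ (AlgebraicClosure ℚ) (γ - J / 2))) ^ 2
                  - Polynomial.C q) ∧
        x.map (algebraMap ℚ (AlgebraicClosure ℚ)) = Polynomial.C c * l.prod :=
  symmetry_iff_factorization_general γ J x
end

section
/- Let ℓ = 2k+1, s ∈ ℕ, ε ∈ {−1,1}, z an indeterminate, and η = (1 − ε(1+2z))/2. Then 2k(k+1)·[ (k+2)(2k+3)^s − ε(2k+1)^{s+1}(1+2z) + (k−1)(2k−1)^s ] = η·ℓ^{s+3} + Σ_{j=1}^{⌊(s+3)/2⌋} e_j·ℓ^{s+3−2j} for some coefficients e_j (polynomials in z with integer coefficients); in particular, this expression, viewed as a polynomial in ℓ = 2k+1, involves only powers ℓ^t with t ≡ s+3 (mod 2). -/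
/-!
With `ℓ = 2k+1` we have `2k(k+1) = (ℓ² - 1)/2`, and the expression is affine in
`ε(1+2z) = 1 - 2η`; it equals `η (ℓ^(s+3) - ℓ^(s+1)) + F(ℓ)` with `4F = (ℓ² - 1) D` and
`D(ℓ) = (ℓ+3)(ℓ+2)^s + (ℓ-3)(ℓ-2)^s - 2ℓ^(s+1)`. The substitution `ℓ ↦ -ℓ` exchanges the first
two terms of `D` up to the sign `(-1)^(s+1)`, so `D`, and with it `F`, only contains monomials
`ℓ^t` with `t ≡ s+1 (mod 2)`. Moreover the `ℓ^(s+1)` terms of `D` cancel, and `D ≡ 0 (mod 4)`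
because `(ℓ-2)^s ≡ (ℓ+2)^s (mod 4)` and `(ℓ+2)^s ≡ ℓ^s (mod 2)`; so `F ∈ ℤ[ℓ]` has degree at most
`s+2`. Finally `η ∈ ℤ[z]` because `ε = ±1`.
-/

open Finset Polynomial

section ParityExpansion

variable {R : Type*} [CommRing R]

theorem Polynomial.coeff_comp_neg_X (p : R[X]) (i : ℕ) :
    (p.comp (-X)).coeff i = (-1) ^ i * p.coeff i := by
  induction p using Polynomial.induction_on' with
  | add p q hp hq => rw [add_comp, coeff_add, coeff_add, hp, hq, mul_add]
  | monomial n a =>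
    have h : (-X : R[X]) ^ n = C ((-1) ^ n) * X ^ n := by rw [neg_pow, C_pow, C_neg, C_1]
    rw [monomial_comp, h, ← mul_assoc, ← C_mul, coeff_C_mul_X_pow, coeff_monomial]
    rcases eq_or_ne i n with rfl | hi
    · simp [mul_comm]
    · simp [hi, Ne.symm hi]

variable [IsAddTorsionFree R]

theorem Polynomial.coeff_eq_zero_of_comp_neg_X_eq {p : R[X]} {n i : ℕ}
    (hp : p.comp (-X) = (-1) ^ n * p) (hi : Odd (n + i)) : p.coeff i = 0 := by
  have h : (-1) ^ i * p.coeff i = (-1) ^ n * p.coeff i := by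
    rw [← coeff_comp_neg_X, hp, ← C_1, ← C_neg, ← C_pow, coeff_C_mul]
  have hodd : ((-1) ^ n * (-1) ^ i : R) = -1 := by rw [← pow_add, hi.neg_one_pow]
  have hsq : ((-1) ^ n * (-1) ^ n : R) = 1 := by rw [← pow_add, ← two_mul, pow_mul]; simp
  rw [← neg_eq_self]
  linear_combination (-p.coeff i) * hodd + (-1) ^ n * h + p.coeff i * hsq

theorem Polynomial.aeval_eq_sum_of_comp_neg_X_eq {S : Type*} [CommSemiring S] [Algebra R S]
    {p : R[X]} {n : ℕ} (hp : p.comp (-X) = (-1) ^ n * p) (hdeg : p.natDegree ≤ n) (x : S) :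
    aeval x p = ∑ j ∈ range (n / 2 + 1), p.coeff (n - 2 * j) • x ^ (n - 2 * j) := by
  have hinj : Set.InjOn (n - 2 * ·) (range (n / 2 + 1)) := by
    intro a ha b hb hab; simp only [coe_range, Set.mem_Iio] at ha hb hab; omega
  rw [aeval_eq_sum_range' (Nat.lt_succ_of_le hdeg),
    ← sum_image (f := fun i => p.coeff i • x ^ i) hinj]
  refine (sum_subset (fun i => ?_) fun i hi hnot => ?_).symm
  · simp only [mem_image, mem_range]; omega
  · simp only [mem_image, mem_range, not_exists, not_and] at hi hnot
    rw [coeff_eq_zero_of_comp_neg_X_eq hp (Nat.odd_iff.2 ?_), zero_smul]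
    by_contra h
    exact hnot ((n - i) / 2) (by omega) (by omega)

end ParityExpansion

theorem Polynomial.coeff_X_add_C_mul_X_add_C_pow_of_lt {R : Type*} [Semiring R] (a b : R)
    {s N : ℕ} (h : s < N) :
    ((X + C a) * (X + C b) ^ s).coeff N = if N = s + 1 then 1 else 0 := by
  obtain ⟨M, rfl⟩ := Nat.exists_eq_add_one_of_ne_zero (Nat.ne_zero_of_lt h)
  rw [add_mul, coeff_add, coeff_X_mul, coeff_C_mul, coeff_X_add_C_pow, coeff_X_add_C_pow,
    Nat.choose_eq_zero_of_lt h]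
  rcases eq_or_lt_of_le (Nat.le_of_lt_succ h) with rfl | hlt
  · simp
  · simp [Nat.choose_eq_zero_of_lt hlt, hlt.ne']

/-- Twice the bracket of the theorem at `ε(1+2z) = 1`, as a polynomial in `ℓ = 2k+1`. -/
noncomputable def bracketPoly (s : ℕ) : ℤ[X] :=
  (X + 3) * (X + 2) ^ s + (X - 3) * (X - 2) ^ s - 2 * X ^ (s + 1)

theorem aeval_bracketPoly (s : ℕ) (k : ℚ) :
    aeval (2 * k + 1) (bracketPoly s) =
      2 * ((k + 2) * (2 * k + 3) ^ s + (k - 1) * (2 * k - 1) ^ s - (2 * k + 1) ^ (s + 1)) := by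
  simp only [bracketPoly, map_sub, map_add, map_mul, map_pow, aeval_X, map_ofNat]
  ring

theorem bracketPoly_comp_neg_X (s : ℕ) :
    (bracketPoly s).comp (-X) = (-1) ^ (s + 1) * bracketPoly s := by
  have h₁ : -X + 2 = -(X - 2 : ℤ[X]) := by ring
  have h₂ : -X - 2 = -(X + 2 : ℤ[X]) := by ring
  simp only [bracketPoly, sub_comp, add_comp, mul_comp, pow_comp, X_comp, ofNat_comp,
    Nat.cast_ofNat, h₁, h₂, neg_pow (X - 2 : ℤ[X]), neg_pow (X + 2 : ℤ[X]), neg_pow (X : ℤ[X])]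
  ring

theorem natDegree_bracketPoly_le (s : ℕ) : (bracketPoly s).natDegree ≤ s := by
  have h : bracketPoly s =
      (X + C 3) * (X + C 2) ^ s + (X + C (-3)) * (X + C (-2)) ^ s - C 2 * X ^ (s + 1) := by
    simp [bracketPoly, sub_eq_add_neg]
  rw [natDegree_le_iff_coeff_eq_zero]
  intro N hN
  rw [h, coeff_sub, coeff_add, coeff_X_add_C_mul_X_add_C_pow_of_lt _ _ hN,
    coeff_X_add_C_mul_X_add_C_pow_of_lt _ _ hN, coeff_C_mul_X_pow]
  split_ifs <;> norm_num

theorem four_dvd_bracketPoly (s : ℕ) : 4 ∣ bracketPoly s := by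
  obtain ⟨q, hq⟩ := sub_dvd_pow_sub_pow (X + 2 : ℤ[X]) (X - 2) s
  obtain ⟨r, hr⟩ := sub_dvd_pow_sub_pow (X + 2 : ℤ[X]) X s
  exact ⟨X * r - (X - 3) * q, by rw [bracketPoly]; linear_combination -(X - 3) * hq + 2 * X * hr⟩

theorem exists_four_mul_eq_X_sq_sub_one_mul_bracketPoly (s : ℕ) :
    ∃ F : ℤ[X], 4 * F = (X ^ 2 - 1) * bracketPoly s ∧
      F.comp (-X) = (-1) ^ (s + 3) * F ∧ F.natDegree ≤ s + 2 := by
  obtain ⟨E, hE⟩ := four_dvd_bracketPoly s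
  have hE_comp : E.comp (-X) = (-1) ^ (s + 1) * E := by
    have h := bracketPoly_comp_neg_X s
    simp only [hE, mul_comp, ofNat_comp, Nat.cast_ofNat] at h
    exact mul_left_cancel₀ (by norm_num : (4 : ℤ[X]) ≠ 0) (by rw [h]; ring)
  have hE_deg : E.natDegree ≤ s := by
    have h := natDegree_bracketPoly_le s
    rwa [hE, ← map_ofNat C 4, natDegree_C_mul four_ne_zero] at h
  refine ⟨(X ^ 2 - 1) * E, by rw [hE]; ring, ?_, ?_⟩
  · simp only [mul_comp, sub_comp, pow_comp, X_comp, one_comp, hE_comp]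
    ring
  · calc ((X ^ 2 - 1) * E).natDegree ≤ 2 + E.natDegree := by
          refine natDegree_mul_le.trans (Nat.add_le_add_right ?_ _); compute_degree
      _ ≤ s + 2 := by omega

theorem exists_aeval_eq_one_sub_mul_div_two {ε : ℚ} (hε : ε = 1 ∨ ε = -1) :
    ∃ η : ℤ[X], ∀ z : ℚ, aeval z η = (1 - ε * (1 + 2 * z)) / 2 := by
  rcases hε with rfl | rfl
  · exact ⟨-X, fun z => by simp; ring⟩
  · exact ⟨1 + X, fun z => by simp; ring⟩

theorem adjoint_parity_expansion (s : ℕ) (ε : ℚ) (hε : ε = 1 ∨ ε = -1) :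
    ∃ e : ℕ → Polynomial ℤ, ∀ z k : ℚ,
      2 * k * (k + 1) *
          ((k + 2) * (2 * k + 3) ^ s - ε * (2 * k + 1) ^ (s + 1) * (1 + 2 * z)
            + (k - 1) * (2 * k - 1) ^ s)
        = (1 - ε * (1 + 2 * z)) / 2 * (2 * k + 1) ^ (s + 3)
          + ∑ j ∈ Finset.Icc 1 ((s + 3) / 2),
              (Polynomial.aeval z (e j)) * (2 * k + 1) ^ (s + 3 - 2 * j) := by
  obtain ⟨η, hη⟩ := exists_aeval_eq_one_sub_mul_div_two hε
  obtain ⟨F, hF, hF_comp, hF_deg⟩ := exists_four_mul_eq_X_sq_sub_one_mul_bracketPoly s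
  refine ⟨fun j => C (F.coeff (s + 3 - 2 * j)) - if j = 1 then η else 0, fun z k => ?_⟩
  have hF_eval := congr_arg (aeval (2 * k + 1)) hF
  simp only [map_mul, map_sub, map_pow, aeval_X, map_one, map_ofNat, aeval_bracketPoly] at hF_eval
  have hF_expand := aeval_eq_sum_of_comp_neg_X_eq hF_comp (by omega) (2 * k + 1)
  rw [range_eq_Ico, sum_eq_sum_Ico_succ_bot (by omega), Ico_add_one_right_eq_Icc,
    coeff_eq_zero_of_natDegree_lt (by omega : F.natDegree < s + 3 - 2 * 0), zero_smul, zero_add,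
    zero_add] at hF_expand
  have h1 : 1 ∈ Icc 1 ((s + 3) / 2) := mem_Icc.2 ⟨le_rfl, by omega⟩
  have hsum : ∑ j ∈ Icc 1 ((s + 3) / 2),
      aeval z (C (F.coeff (s + 3 - 2 * j)) - if j = 1 then η else 0) * (2 * k + 1) ^ (s + 3 - 2 * j)
        = aeval (2 * k + 1) F - (1 - ε * (1 + 2 * z)) / 2 * (2 * k + 1) ^ (s + 1) := by
    simp only [hF_expand, map_sub, map_intCast, eq_intCast, apply_ite (aeval z), map_zero, hη,
      sub_mul, ite_mul, zero_mul, sum_sub_distrib, sum_ite_eq', if_pos h1, zsmul_eq_mul,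
      show s + 3 - 2 * 1 = s + 1 from rfl]
  rw [hsum]
  linear_combination (-1 / 4) * hF_eval
end
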